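/- arXiv:1912.04607 — 6 statements merged into one kernel-verified Lean document; each statement's English description precedes it below -/
import Mathlib

section
/- Let (Ω, 𝒜, P) be a probability space, p_1,…,p_m : Ω → [0,1] measurable random variables, H0 ⊆ {1,…,m} and H1 = {1,…,m} ∖ H0, α ∈ (0,1), and let R be the step-down rejection set associated with nondecreasing critical values 0 ≤ τ_1 ≤ … ≤ τ_m ≤ 1. Define the random variable ℓ̃ = min{ℓ ∈ {1,…,m} : ℓ − Σ_{i∈H1} 1{p_i ≤ τ_ℓ} ≥ ⌊αℓ⌋ + 1}, with ℓ̃ = m+1 if this set is empty. Then P(FDP(R) > α) ≤ Σ_{ℓ=1}^{m} 1{|H0| ≤ m(ℓ)} · P( Σ_{i∈H0} 1{p_i ≤ τ_ℓ} ≥ ⌊αℓ⌋ + 1 and ℓ̃ = ℓ ). -/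
open MeasureTheory ProbabilityTheory Finset

namespace FDX

/-- `m(ℓ) = m − ℓ + ⌊α·ℓ⌋ + 1`. -/
noncomputable def mfun (α : ℝ) (m ℓ : ℕ) : ℕ := m - ℓ + ⌊α * ℓ⌋₊ + 1

/-- `k(ℓ) = ⌊α·ℓ⌋ + 1`. -/
noncomputable def kfun (α : ℝ) (ℓ : ℕ) : ℕ := ⌊α * ℓ⌋₊ + 1

/-- Number of p-values that are `≤ t`. -/
noncomputable def countLe {m : ℕ} (p : Fin m → ℝ) (t : ℝ) : ℕ :=
  (Finset.univ.filter (fun i => p i ≤ t)).card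

/-- The step-down index `ℓ̂ = max{ℓ ∈ {0,…,m} : ∀ ℓ' ≤ ℓ, p_{σ(ℓ')} ≤ τ_{ℓ'}}`, expressed
via the equivalent condition that for each `1 ≤ ℓ' ≤ ℓ` at least `ℓ'` p-values are `≤ τ_{ℓ'}`. -/
noncomputable def sdIndex {m : ℕ} (p : Fin m → ℝ) (τ : ℕ → ℝ) : ℕ :=
  @Nat.findGreatest (fun ℓ => ∀ ℓ', 1 ≤ ℓ' → ℓ' ≤ ℓ → ℓ' ≤ countLe p (τ ℓ'))
    (Classical.decPred _) m

/-- The step-down rejection set: `R = {i : p_i ≤ τ_{ℓ̂}}` if `ℓ̂ ≥ 1`, and `R = ∅` if `ℓ̂ = 0`. -/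
noncomputable def sdReject {m : ℕ} (p : Fin m → ℝ) (τ : ℕ → ℝ) : Finset (Fin m) :=
  if sdIndex p τ = 0 then ∅ else Finset.univ.filter (fun i => p i ≤ τ (sdIndex p τ))

/-- The false discovery proportion `|R ∩ H0| / max(|R|, 1)`. -/
noncomputable def FDP {m : ℕ} (H0 R : Finset (Fin m)) : ℝ := ((R ∩ H0).card : ℝ) / max (R.card : ℝ) 1

/-- The binomial tail `P(Bin[n,t] ≥ k)`. -/
noncomputable def binTail (n : ℕ) (t : ℝ) (k : ℕ) : ℝ :=
  ∑ j ∈ Finset.Icc k n, (n.choose j : ℝ) * t ^ j * (1 - t) ^ (n - j)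

/-- The Poisson-binomial tail `P(PBin[(π_i)_{i ∈ s}] ≥ k)`. -/
noncomputable def pbinTail {ι : Type*} [DecidableEq ι] (s : Finset ι) (π : ι → ℝ) (k : ℕ) : ℝ :=
  ∑ S ∈ s.powerset.filter (fun S => k ≤ S.card), (∏ i ∈ S, π i) * ∏ i ∈ s \ S, (1 - π i)

/-- The nonincreasing rearrangement: `descSort v j` is the `(j+1)`-th largest value of `v`. -/
noncomputable def descSort {m : ℕ} (v : Fin m → ℝ) : Fin m → ℝ :=
  fun j => v (Tuple.sort (fun i => -v i) j)

/-- The geometric-average transform `F̃_j(v) = 1 − (∏_{j'=1}^{j} (1 − v_{(j')}))^{1/j}`. -/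
noncomputable def Ftil {m : ℕ} (v : Fin m → ℝ) (j : ℕ) : ℝ :=
  1 - (∏ j' ∈ Finset.univ.filter (fun j' : Fin m => (j' : ℕ) < j), (1 - descSort v j')) ^ ((1 : ℝ) / j)

end FDX

private lemma countLe_mono {m : ℕ} (q : Fin m → ℝ) {s t : ℝ} (hst : s ≤ t) :
    FDX.countLe q s ≤ FDX.countLe q t := by
  apply Finset.card_le_card
  intro i hi
  simp only [Finset.mem_filter] at *
  exact ⟨hi.1, hi.2.trans hst⟩

private lemma split_card {m : ℕ} (H0 : Finset (Fin m)) (q : Fin m → ℝ) (t : ℝ) :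
    FDX.countLe q t
      = (H0.filter (fun i => q i ≤ t)).card + ((H0ᶜ).filter (fun i => q i ≤ t)).card := by
  rw [FDX.countLe,
    ← Finset.card_union_of_disjoint (Finset.disjoint_filter_filter disjoint_compl_right),
    ← Finset.filter_union, Finset.union_compl]

private lemma key {m : ℕ} (q : Fin m → ℝ) (H0 : Finset (Fin m)) {α : ℝ}
    (hα0 : 0 < α) (hα1 : α < 1)
    (τ : ℕ → ℝ) (hτmono : ∀ ℓ ℓ', 1 ≤ ℓ → ℓ ≤ ℓ' → ℓ' ≤ m → τ ℓ ≤ τ ℓ')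
    (hω : α < FDX.FDP H0 (FDX.sdReject q τ)) :
    ∃ ℓ, 1 ≤ ℓ ∧ ℓ ≤ m ∧ H0.card ≤ FDX.mfun α m ℓ ∧
      FDX.kfun α ℓ ≤ (H0.filter (fun i => q i ≤ τ ℓ)).card ∧
      sInf ({ℓ' | 1 ≤ ℓ' ∧ ℓ' ≤ m ∧
          FDX.kfun α ℓ' ≤ ℓ' - (((H0)ᶜ).filter (fun i => q i ≤ τ ℓ')).card} ∪ {m + 1}) = ℓ := by
  have hc1 : 0 < ((FDX.sdReject q τ) ∩ H0).card := by
    by_contra h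
    push_neg at h
    have h0 : ((FDX.sdReject q τ) ∩ H0).card = 0 := by omega
    rw [FDX.FDP, h0] at hω
    simp only [Nat.cast_zero, zero_div] at hω
    linarith
  have hidx : FDX.sdIndex q τ ≠ 0 := by
    intro h
    rw [FDX.sdReject, if_pos h] at hc1
    simp at hc1
  have hR : FDX.sdReject q τ = Finset.univ.filter (fun i => q i ≤ τ (FDX.sdIndex q τ)) :=
    if_neg hidx
  have hℓ1 : 1 ≤ FDX.sdIndex q τ := Nat.one_le_iff_ne_zero.mpr hidx
  have hsd := (@Nat.findGreatest_eq_iff (FDX.sdIndex q τ) m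
      (fun ℓ => ∀ ℓ', 1 ≤ ℓ' → ℓ' ≤ ℓ → ℓ' ≤ FDX.countLe q (τ ℓ'))
      (Classical.decPred _)).mp rfl
  have hℓm : FDX.sdIndex q τ ≤ m := hsd.1
  have hspec : ∀ ℓ', 1 ≤ ℓ' → ℓ' ≤ FDX.sdIndex q τ → ℓ' ≤ FDX.countLe q (τ ℓ') :=
    hsd.2.1 hidx
  have hcountm : ∀ t, FDX.countLe q t ≤ m := by
    intro t
    rw [FDX.countLe]
    exact (Finset.card_filter_le _ _).trans (by simp)
  have hrle : FDX.countLe q (τ (FDX.sdIndex q τ)) ≤ FDX.sdIndex q τ := by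
    by_contra hlt
    push_neg at hlt
    have hcm := hcountm (τ (FDX.sdIndex q τ))
    have hsm : FDX.sdIndex q τ + 1 ≤ m := by omega
    have hng : ¬ (∀ ℓ', 1 ≤ ℓ' → ℓ' ≤ FDX.sdIndex q τ + 1 → ℓ' ≤ FDX.countLe q (τ ℓ')) :=
      hsd.2.2 (Nat.lt_succ_self _) hsm
    apply hng
    intro ℓ' h1 h2
    rcases Nat.lt_or_ge ℓ' (FDX.sdIndex q τ + 1) with h | h
    · exact hspec ℓ' h1 (by omega)
    · have he : ℓ' = FDX.sdIndex q τ + 1 := by omega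
      subst he
      have hmono := countLe_mono q
        (hτmono (FDX.sdIndex q τ) (FDX.sdIndex q τ + 1) hℓ1 (by omega) hsm)
      omega
  have hreq : FDX.countLe q (τ (FDX.sdIndex q τ)) = FDX.sdIndex q τ :=
    le_antisymm hrle (hspec _ hℓ1 le_rfl)
  have hrcard : (FDX.sdReject q τ).card = FDX.sdIndex q τ := by
    rw [hR]; exact hreq
  have hRH : (FDX.sdReject q τ) ∩ H0 = H0.filter (fun i => q i ≤ τ (FDX.sdIndex q τ)) := by
    rw [hR]; ext i; simp [Finset.mem_filter, and_comm]
  have hpos : (0:ℝ) < ((FDX.sdReject q τ).card : ℝ) := by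
    rw [hrcard]; exact_mod_cast Nat.pos_of_ne_zero hidx
  have hmax : max ((FDX.sdReject q τ).card : ℝ) 1 = ((FDX.sdReject q τ).card : ℝ) :=
    max_eq_left (by rw [hrcard]; exact_mod_cast hℓ1)
  have hnum : FDX.kfun α (FDX.sdIndex q τ) ≤ ((FDX.sdReject q τ) ∩ H0).card := by
    rw [FDX.FDP, hmax] at hω
    have h1 : α * ((FDX.sdReject q τ).card : ℝ) < (((FDX.sdReject q τ) ∩ H0).card : ℝ) :=
      (lt_div_iff₀ hpos).mp hω
    have h2 : ⌊α * ((FDX.sdIndex q τ : ℕ) : ℝ)⌋₊ < ((FDX.sdReject q τ) ∩ H0).card := by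
      rw [Nat.floor_lt (by positivity)]
      calc α * ((FDX.sdIndex q τ : ℕ) : ℝ)
          = α * ((FDX.sdReject q τ).card : ℝ) := by rw [hrcard]
        _ < _ := h1
    rw [FDX.kfun]
    omega
  set T : Set ℕ := {ℓ' | 1 ≤ ℓ' ∧ ℓ' ≤ m ∧
      FDX.kfun α ℓ' ≤ ℓ' - (((H0)ᶜ).filter (fun i => q i ≤ τ ℓ')).card} ∪ {m + 1} with hT
  have hTne : T.Nonempty := ⟨m + 1, Or.inr rfl⟩
  have hUV := split_card H0 q (τ (FDX.sdIndex q τ))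
  have hUc : ((FDX.sdReject q τ) ∩ H0).card
      = (H0.filter (fun i => q i ≤ τ (FDX.sdIndex q τ))).card := by rw [hRH]
  have hℓhT : FDX.sdIndex q τ ∈ T :=
    Set.mem_union_left _ (by exact ⟨hℓ1, hℓm, by omega⟩)
  have hLle : sInf T ≤ FDX.sdIndex q τ := Nat.sInf_le hℓhT
  have hLT : sInf T ∈ T := Nat.sInf_mem hTne
  have hLmem : 1 ≤ sInf T ∧ sInf T ≤ m ∧
      FDX.kfun α (sInf T) ≤ sInf T - (((H0)ᶜ).filter (fun i => q i ≤ τ (sInf T))).card := by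
    rcases hLT with h | h
    · exact h
    · exfalso
      have : sInf T = m + 1 := h
      omega
  obtain ⟨hL1, hLm, hLkV⟩ := hLmem
  have hcL : sInf T ≤ FDX.countLe q (τ (sInf T)) := hspec _ hL1 hLle
  have hUVL := split_card H0 q (τ (sInf T))
  have hUk : FDX.kfun α (sInf T) ≤ (H0.filter (fun i => q i ≤ τ (sInf T))).card := by omega
  have hcard : H0.card ≤ m := by simpa using Finset.card_le_univ H0
  have hmb : H0.card ≤ FDX.mfun α m (sInf T) := by
    rw [FDX.mfun]
    rcases Nat.lt_or_ge (sInf T) 2 with h2 | h2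
    · have hL1' : sInf T = 1 := by omega
      have hfl : ⌊α * ((1:ℕ):ℝ)⌋₊ = 0 := by
        rw [Nat.floor_eq_zero]; simpa using hα1
      rw [hL1', hfl]
      omega
    · have h1' : 1 ≤ sInf T - 1 := by omega
      have h2' : sInf T - 1 ≤ m := by omega
      have hnotmem : (sInf T - 1) ∉ T := Nat.notMem_of_lt_sInf (by omega)
      have hVlow : ¬ (FDX.kfun α (sInf T - 1)
          ≤ (sInf T - 1) - (((H0)ᶜ).filter (fun i => q i ≤ τ (sInf T - 1))).card) :=
        fun hc => hnotmem (Set.mem_union_left _ ⟨h1', h2', hc⟩)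
      rw [FDX.kfun] at hVlow
      push_neg at hVlow
      have hVcard : (((H0)ᶜ).filter (fun i => q i ≤ τ (sInf T - 1))).card ≤ m - H0.card := by
        calc (((H0)ᶜ).filter (fun i => q i ≤ τ (sInf T - 1))).card
            ≤ (H0ᶜ).card := Finset.card_filter_le _ _
          _ = m - H0.card := by simp [Finset.card_compl]
      have hfloor : ⌊α * ((sInf T - 1 : ℕ):ℝ)⌋₊ ≤ ⌊α * ((sInf T : ℕ):ℝ)⌋₊ := by
        apply Nat.floor_mono
        apply mul_le_mul_of_nonneg_left _ hα0.le
        exact_mod_cast Nat.sub_le _ _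
      omega
  exact ⟨sInf T, hL1, hLm, hmb, hUk, rfl⟩

/-- For any step-down procedure with nondecreasing critical values
`0 ≤ τ_1 ≤ … ≤ τ_m ≤ 1` and any probability measure, the FDX is bounded by
`∑_{ℓ=1}^m 1{|H0| ≤ m(ℓ)} · P(∑_{i∈H0} 1{p_i ≤ τ_ℓ} ≥ ⌊αℓ⌋+1, ℓ̃ = ℓ)`, where
`ℓ̃ = min{ℓ ∈ {1,…,m} : ℓ − ∑_{i∈H1} 1{p_i ≤ τ_ℓ} ≥ ⌊αℓ⌋+1}` (`= m+1` if the set is empty). -/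
theorem stmt_0
    {Ω : Type*} [MeasurableSpace Ω] (P : MeasureTheory.Measure Ω) [IsProbabilityMeasure P]
    {m : ℕ} (p : Fin m → Ω → ℝ)
    (hmeas : ∀ i, Measurable (p i))
    (hp01 : ∀ i ω, p i ω ∈ Set.Icc (0 : ℝ) 1)
    (H0 : Finset (Fin m))
    {α : ℝ} (hα : α ∈ Set.Ioo (0 : ℝ) 1)
    (τ : ℕ → ℝ)
    (hτ01 : ∀ ℓ ∈ Finset.Icc 1 m, τ ℓ ∈ Set.Icc (0 : ℝ) 1)
    (hτmono : ∀ ℓ ℓ', 1 ≤ ℓ → ℓ ≤ ℓ' → ℓ' ≤ m → τ ℓ ≤ τ ℓ') :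
    P {ω | α < FDX.FDP H0 (FDX.sdReject (fun i => p i ω) τ)} ≤
      ∑ ℓ ∈ Finset.Icc 1 m,
        if H0.card ≤ FDX.mfun α m ℓ then
          P {ω | FDX.kfun α ℓ ≤ (H0.filter (fun i => p i ω ≤ τ ℓ)).card ∧
              sInf ({ℓ' | 1 ≤ ℓ' ∧ ℓ' ≤ m ∧
                  FDX.kfun α ℓ' ≤ ℓ' - (((H0)ᶜ).filter (fun i => p i ω ≤ τ ℓ')).card} ∪ {m + 1}) = ℓ}
        else 0 := by
  
  obtain ⟨hα0, hα1⟩ := hα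
  have hsub : {ω | α < FDX.FDP H0 (FDX.sdReject (fun i => p i ω) τ)} ⊆
      ⋃ ℓ ∈ (Finset.Icc 1 m).filter (fun ℓ => H0.card ≤ FDX.mfun α m ℓ),
        {ω | FDX.kfun α ℓ ≤ (H0.filter (fun i => p i ω ≤ τ ℓ)).card ∧
            sInf ({ℓ' | 1 ≤ ℓ' ∧ ℓ' ≤ m ∧
                FDX.kfun α ℓ' ≤ ℓ' - (((H0)ᶜ).filter (fun i => p i ω ≤ τ ℓ')).card} ∪ {m + 1}) = ℓ} := by
    intro ω hω
    obtain ⟨ℓ, h1, h2, h3, h4, h5⟩ := key (fun i => p i ω) H0 hα0 hα1 τ hτmono hω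
    refine Set.mem_iUnion₂.mpr ⟨ℓ, ?_, h4, h5⟩
    simp only [Finset.mem_filter, Finset.mem_Icc]
    exact ⟨⟨h1, h2⟩, h3⟩
  refine le_trans (measure_mono hsub) ?_
  refine le_trans (measure_biUnion_finset_le _ _) ?_
  exact le_of_eq (Finset.sum_filter _ _)
end

section
/- Let (Ω, 𝒜, P) be a probability space, p_1,…,p_m : Ω → [0,1] measurable random variables, H0 ⊆ {1,…,m} and H1 = {1,…,m} ∖ H0, α ∈ (0,1). Assume the random vector (p_i)_{i∈H0} is independent of the random vector (p_i)_{i∈H1}. Let R be the step-down rejection set associated with nondecreasing critical values 0 ≤ τ_1 ≤ … ≤ τ_m ≤ 1. Then P(FDP(R) > α) ≤ max over ℓ ∈ {1,…,m} with |H0| ≤ m(ℓ) of P( Σ_{i∈H0} 1{p_i ≤ τ_ℓ} ≥ ⌊αℓ⌋ + 1 ). -/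
open MeasureTheory ProbabilityTheory Finset

namespace FDX

variable {m : ℕ}


lemma floor_mul_le_add {α : ℝ} (hα0 : 0 ≤ α) (hα1 : α ≤ 1) {a b : ℕ} (hab : a ≤ b) :
    ⌊α * b⌋₊ ≤ ⌊α * a⌋₊ + (b - a) := by
  have h1 : α * b ≤ α * a + ((b - a : ℕ) : ℝ) := by
    have hb : ((b : ℕ) : ℝ) = (a : ℝ) + ((b - a : ℕ) : ℝ) := by
      rw [Nat.cast_sub hab]; ring
    rw [hb, mul_add]
    have := mul_le_of_le_one_left (Nat.cast_nonneg (α := ℝ) (b - a)) hα1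
    linarith
  calc ⌊α * b⌋₊ ≤ ⌊α * a + ((b - a : ℕ) : ℝ)⌋₊ := Nat.floor_le_floor h1
    _ = ⌊α * a⌋₊ + (b - a) := Nat.floor_add_natCast (by positivity) _

noncomputable def ccount (τ : ℕ → ℝ) (H0 : Finset (Fin m)) (y : {i : Fin m // i ∉ H0} → ℝ)
    (ℓ : ℕ) : ℕ :=
  (Finset.univ.filter fun i => y i ≤ τ ℓ).card

lemma lamF_ex (α : ℝ) (τ : ℕ → ℝ) (H0 : Finset (Fin m)) (y : {i : Fin m // i ∉ H0} → ℝ) :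
    ∃ ℓ, 1 ≤ ℓ ∧ (m ≤ ℓ ∨ ccount τ H0 y (ℓ + 1) + kfun α ℓ ≤ ℓ) :=
  ⟨max 1 m, le_max_left _ _, Or.inl (le_max_right _ _)⟩

noncomputable def lamF (α : ℝ) (τ : ℕ → ℝ) (H0 : Finset (Fin m))
    (y : {i : Fin m // i ∉ H0} → ℝ) : ℕ :=
  Nat.find (lamF_ex α τ H0 y)

noncomputable def lSdef (α : ℝ) (m : ℕ) (H0 : Finset (Fin m)) : ℕ :=
  Nat.findGreatest (fun ℓ => ℓ ≤ (m - H0.card) + 1 + ⌊α * ℓ⌋₊) m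

noncomputable def Lstar (α : ℝ) (τ : ℕ → ℝ) (H0 : Finset (Fin m))
    (y : {i : Fin m // i ∉ H0} → ℝ) : ℕ :=
  min (lSdef α m H0) (lamF α τ H0 y)

lemma card_filter_subtype (Q : Fin m → Prop) [DecidablePred Q] (q : Fin m → Prop)
    [DecidablePred q] :
    (Finset.univ.filter fun i : {i : Fin m // Q i} => q i.1).card
      = (Finset.univ.filter fun i : Fin m => Q i ∧ q i).card := by
  refine Finset.card_bij (fun a _ => a.1) ?_ ?_ ?_
  · intro a ha
    simp only [Finset.mem_filter, Finset.mem_univ, true_and] at ha ⊢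
    exact ⟨a.2, ha⟩
  · intro a _ b _ h; exact Subtype.ext h
  · intro b hb
    simp only [Finset.mem_filter, Finset.mem_univ, true_and] at hb
    exact ⟨⟨b, hb.1⟩, by simp [hb.2], rfl⟩

lemma mem_card_eq (H0 : Finset (Fin m)) (x : Fin m → ℝ) (t : ℝ) :
    (Finset.univ.filter fun i : {i : Fin m // i ∈ H0} => x i.1 ≤ t).card
      = (H0.filter fun i => x i ≤ t).card := by
  refine Finset.card_bij (fun a _ => a.1) ?_ ?_ ?_
  · intro a ha
    simp only [Finset.mem_filter, Finset.mem_univ, true_and] at ha ⊢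
    exact ⟨a.2, ha⟩
  · intro a _ b _ h; exact Subtype.ext h
  · intro b hb
    simp only [Finset.mem_filter] at hb
    exact ⟨⟨b, hb.1⟩, by simp [hb.2], rfl⟩

lemma count_split (H0 : Finset (Fin m)) (x : Fin m → ℝ) (t : ℝ) :
    countLe x t = (H0.filter fun i => x i ≤ t).card
      + (Finset.univ.filter fun i : Fin m => i ∉ H0 ∧ x i ≤ t).card := by
  classical
  unfold countLe
  rw [← Finset.card_filter_add_card_filter_not
    (s := Finset.univ.filter fun i : Fin m => x i ≤ t) (p := fun i => i ∈ H0)]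
  congr 1
  · rw [Finset.filter_comm, Finset.filter_univ_mem]
  · rw [Finset.filter_comm, Finset.filter_filter]

lemma ccount_eq (τ : ℕ → ℝ) (H0 : Finset (Fin m)) (x : Fin m → ℝ) (ℓ : ℕ) :
    ccount τ H0 (fun i => x i.1) ℓ
      = (Finset.univ.filter fun i : Fin m => i ∉ H0 ∧ x i ≤ τ ℓ).card := by
  unfold ccount
  exact card_filter_subtype (fun i => i ∉ H0) (fun i => x i ≤ τ ℓ)

lemma ccount_le_compl (τ : ℕ → ℝ) (H0 : Finset (Fin m)) (y : {i : Fin m // i ∉ H0} → ℝ)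
    (ℓ : ℕ) : ccount τ H0 y ℓ + H0.card ≤ m := by
  classical
  have h1 : ccount τ H0 y ℓ ≤ Fintype.card {i : Fin m // i ∉ H0} :=
    le_trans (Finset.card_filter_le _ _) (le_of_eq Finset.card_univ)
  have h2 : Fintype.card {i : Fin m // i ∉ H0} = (Finset.univ.filter fun i : Fin m => i ∉ H0).card :=
    Fintype.card_subtype _
  have h3 : (Finset.univ.filter fun i : Fin m => i ∉ H0) = Finset.univ \ H0 := by
    rw [Finset.filter_not, Finset.filter_univ_mem]
  have h4 : (Finset.univ \ H0).card = m - H0.card := by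
    rw [Finset.card_sdiff_of_subset (Finset.subset_univ _), Finset.card_univ, Fintype.card_fin]
  have h5 : H0.card ≤ m := by
    have := Finset.card_le_univ H0
    rwa [Fintype.card_fin] at this
  rw [h2, h3, h4] at h1
  omega


theorem key (hm : 0 < m) {α : ℝ} (hα0 : 0 < α) (hα1 : α < 1) (τ : ℕ → ℝ)
    (hτmono : ∀ ℓ ℓ', 1 ≤ ℓ → ℓ ≤ ℓ' → ℓ' ≤ m → τ ℓ ≤ τ ℓ')
    (H0 : Finset (Fin m)) (x : Fin m → ℝ)
    (hFDP : α < FDP H0 (sdReject x τ)) :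
    1 ≤ Lstar α τ H0 (fun i => x i.1) ∧ Lstar α τ H0 (fun i => x i.1) ≤ m ∧
    H0.card ≤ mfun α m (Lstar α τ H0 (fun i => x i.1)) ∧
    kfun α (Lstar α τ H0 (fun i => x i.1))
      ≤ (H0.filter fun i => x i ≤ τ (Lstar α τ H0 (fun i => x i.1))).card := by
  classical
  set y : {i : Fin m // i ∉ H0} → ℝ := fun i => x i.1 with hy
  -- step-down index facts
  obtain ⟨hLhat_le, hPmem, hgt⟩ :=
    (Nat.findGreatest_eq_iff (P := fun ℓ => ∀ ℓ', 1 ≤ ℓ' → ℓ' ≤ ℓ → ℓ' ≤ countLe x (τ ℓ'))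
      (k := m) (m := sdIndex x τ)).mp rfl
  have hLhat0 : sdIndex x τ ≠ 0 := by
    intro h0
    rw [FDP, sdReject, if_pos h0] at hFDP
    simp at hFDP
    linarith
  have hLhat1 : 1 ≤ sdIndex x τ := Nat.one_le_iff_ne_zero.mpr hLhat0
  have hPred := hPmem hLhat0
  set LH := sdIndex x τ with hLhatdef
  have hcount : LH ≤ countLe x (τ LH) := hPred LH hLhat1 le_rfl
  -- FDP event unpacking
  have hVk : kfun α LH ≤ (H0.filter fun i => x i ≤ τ LH).card := by
    rw [FDP, sdReject, if_neg hLhat0] at hFDP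
    have hRH0 : (Finset.univ.filter fun i => x i ≤ τ LH) ∩ H0
        = H0.filter fun i => x i ≤ τ LH := by
      rw [Finset.filter_inter, Finset.univ_inter]
    rw [hRH0] at hFDP
    have hcpos : (1 : ℝ) ≤ ((Finset.univ.filter fun i => x i ≤ τ LH).card : ℝ) := by
      exact_mod_cast le_trans hLhat1 hcount
    rw [max_eq_left hcpos] at hFDP
    have hmul : α * ((Finset.univ.filter fun i => x i ≤ τ LH).card : ℝ)
        < ((H0.filter fun i => x i ≤ τ LH).card : ℝ) :=
      (lt_div_iff₀ (by linarith)).mp hFDP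
    have hα' : α * (LH : ℝ) < ((H0.filter fun i => x i ≤ τ LH).card : ℝ) := by
      have : α * (LH : ℝ) ≤ α * ((Finset.univ.filter fun i => x i ≤ τ LH).card : ℝ) := by
        have : (LH : ℝ) ≤ ((Finset.univ.filter fun i => x i ≤ τ LH).card : ℝ) := by
          exact_mod_cast hcount
        nlinarith
      linarith
    have := (Nat.floor_lt (by positivity)).mpr hα'
    unfold kfun
    omega
  -- lamF ≤ LH
  have hlam_le : lamF α τ H0 y ≤ LH := by
    apply Nat.find_min'
    refine ⟨hLhat1, ?_⟩
    rcases eq_or_lt_of_le hLhat_le with heq | hlt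
    · exact Or.inl heq.ge
    · refine Or.inr ?_
      have hnP := hgt (Nat.lt_succ_self LH) hlt
      have hcle : countLe x (τ (LH + 1)) ≤ LH := by
        by_contra h'
        push_neg at h'
        apply hnP
        intro ℓ' h1 h2
        rcases Nat.lt_or_ge ℓ' (LH + 1) with h3 | h3
        · exact hPred ℓ' h1 (Nat.lt_succ_iff.mp h3)
        · have : ℓ' = LH + 1 := le_antisymm h2 h3
          rw [this]; exact h'
      have hsplit := count_split H0 x (τ (LH + 1))
      have hcc := ccount_eq τ H0 x (LH + 1)
      have hVmono : (H0.filter fun i => x i ≤ τ LH).card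
          ≤ (H0.filter fun i => x i ≤ τ (LH + 1)).card := by
        apply Finset.card_le_card
        intro i hi
        simp only [Finset.mem_filter] at hi ⊢
        exact ⟨hi.1, le_trans hi.2 (hτmono LH (LH + 1) hLhat1 (Nat.le_succ _) hlt)⟩
      rw [← hy] at hcc
      omega
  -- lS facts
  have hlS_le : lSdef α m H0 ≤ m :=
    Nat.findGreatest_le (P := fun ℓ => ℓ ≤ (m - H0.card) + 1 + ⌊α * ℓ⌋₊) m
  have hlS_pos : 1 ≤ lSdef α m H0 :=
    Nat.le_findGreatest (P := fun ℓ => ℓ ≤ (m - H0.card) + 1 + ⌊α * ℓ⌋₊) hm (by omega)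
  have hlS_prop : lSdef α m H0 ≤ (m - H0.card) + 1 + ⌊α * (lSdef α m H0 : ℕ)⌋₊ :=
    Nat.findGreatest_spec (P := fun ℓ => ℓ ≤ (m - H0.card) + 1 + ⌊α * ℓ⌋₊)
      (m := 1) hm (by omega)
  set L := Lstar α τ H0 y with hLdef
  have hlam_pos : 1 ≤ lamF α τ H0 y := (Nat.find_spec (lamF_ex α τ H0 y)).1
  have hL1 : 1 ≤ L := le_min hlS_pos hlam_pos
  have hLlS : L ≤ lSdef α m H0 := min_le_left _ _
  have hLlam : L ≤ lamF α τ H0 y := min_le_right _ _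
  have hLm : L ≤ m := le_trans hLlS hlS_le
  have hLLhat : L ≤ LH := le_trans hLlam hlam_le
  have hcard_le : H0.card ≤ m := ccount_le_compl τ H0 y 0 |>.trans' (by omega)
  refine ⟨hL1, hLm, ?_, ?_⟩
  · -- H0.card ≤ mfun α m L
    have hfl := floor_mul_le_add hα0.le hα1.le hLlS
    unfold mfun
    omega
  · -- kfun α L ≤ V_L
    rcases eq_or_lt_of_le hLLhat with heq | hlt
    · rw [heq]; exact hVk
    · have hcountL : L ≤ countLe x (τ L) := hPred L hL1 hlt.le
      have hsplit := count_split H0 x (τ L)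
      have hcc := ccount_eq τ H0 x L
      rw [← hy] at hcc
      suffices hC : ccount τ H0 y L + kfun α L ≤ L by omega
      rcases le_or_gt (lamF α τ H0 y) (lSdef α m H0) with hcase | hcase
      · -- L = lamF
        have hLeq : L = lamF α τ H0 y := min_eq_right hcase
        have hlam_lt : lamF α τ H0 y < m := by
          rw [← hLeq]; exact lt_of_lt_of_le hlt hLhat_le
        obtain ⟨-, hQ⟩ := Nat.find_spec (lamF_ex α τ H0 y)
        rcases hQ with h | h
        · have h'' : m ≤ lamF α τ H0 y := h
          omega
        · have h' : ccount τ H0 y (lamF α τ H0 y + 1) + kfun α (lamF α τ H0 y)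
              ≤ lamF α τ H0 y := h
          have hmono : ccount τ H0 y (lamF α τ H0 y) ≤ ccount τ H0 y (lamF α τ H0 y + 1) := by
            apply Finset.card_le_card
            intro i hi
            simp only [Finset.mem_filter] at hi ⊢
            exact ⟨hi.1, le_trans hi.2 (hτmono _ _ hlam_pos (Nat.le_succ _) hlam_lt)⟩
          rw [hLeq]
          omega
      · -- L = lS < lamF
        have hLeq : L = lSdef α m H0 := min_eq_left hcase.le
        have hlS_lt : lSdef α m H0 < m := by
          rw [← hLeq]; exact lt_of_lt_of_le hlt hLhat_le
        have hng := Nat.findGreatest_is_greatest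
          (P := fun ℓ => ℓ ≤ (m - H0.card) + 1 + ⌊α * ℓ⌋₊) (n := m)
          (k := lSdef α m H0 + 1) (Nat.lt_succ_self _) (by omega)
        simp only [not_le] at hng
        have hfl : ⌊α * ((lSdef α m H0 : ℕ) : ℝ)⌋₊ ≤ ⌊α * ((lSdef α m H0 + 1 : ℕ) : ℝ)⌋₊ := by
          apply Nat.floor_le_floor
          have h9 : ((lSdef α m H0 : ℕ) : ℝ) ≤ ((lSdef α m H0 + 1 : ℕ) : ℝ) := by
            exact_mod_cast Nat.le_succ _
          nlinarith
        have hccle := ccount_le_compl τ H0 y (lSdef α m H0)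
        rw [hLeq]
        unfold kfun
        omega

lemma meas_card {ι : Type*} [Fintype ι] (t : ℝ) :
    Measurable fun x : ι → ℝ => (Finset.univ.filter fun i => x i ≤ t).card := by
  have h : (fun x : ι → ℝ => (Finset.univ.filter fun i => x i ≤ t).card)
      = fun x => ∑ i : ι, if x i ≤ t then 1 else 0 := by
    funext x; rw [Finset.card_filter]
  rw [h]
  exact Finset.measurable_sum _ fun i _ =>
    Measurable.ite (measurableSet_le (measurable_pi_apply i) measurable_const)
      measurable_const measurable_const

lemma lamF_meas (α : ℝ) (τ : ℕ → ℝ) (H0 : Finset (Fin m)) :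
    Measurable fun y : {i : Fin m // i ∉ H0} → ℝ => lamF α τ H0 y := by
  unfold lamF
  apply measurable_find
  intro k
  simp only [Set.setOf_and, Set.setOf_or]
  refine MeasurableSet.inter (MeasurableSet.const _)
    (MeasurableSet.union (MeasurableSet.const _) ?_)
  have h : {a : {i : Fin m // i ∉ H0} → ℝ | ccount τ H0 a (k + 1) + kfun α k ≤ k}
      = (fun y : {i : Fin m // i ∉ H0} → ℝ => ccount τ H0 y (k + 1)) ⁻¹'
        {n : ℕ | n + kfun α k ≤ k} := rfl
  rw [h]
  exact meas_card (ι := {i : Fin m // i ∉ H0}) (τ (k + 1)) trivial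

lemma Lstar_meas (α : ℝ) (τ : ℕ → ℝ) (H0 : Finset (Fin m)) :
    Measurable fun y : {i : Fin m // i ∉ H0} → ℝ => Lstar α τ H0 y :=
  measurable_from_top.comp (lamF_meas α τ H0)

end FDX



/-- Under independence of the null p-value family from the alternative p-value
family, the FDX of a step-down procedure with nondecreasing critical values in `[0,1]` is
bounded by `max{P(∑_{i∈H0} 1{p_i ≤ τ_ℓ} ≥ ⌊αℓ⌋+1) : 1 ≤ ℓ ≤ m, |H0| ≤ m(ℓ)}`. -/
theorem stmt_1
    {Ω : Type*} [MeasurableSpace Ω] (P : MeasureTheory.Measure Ω) [IsProbabilityMeasure P]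
    {m : ℕ} (p : Fin m → Ω → ℝ)
    (hmeas : ∀ i, Measurable (p i))
    (hp01 : ∀ i ω, p i ω ∈ Set.Icc (0 : ℝ) 1)
    (H0 : Finset (Fin m))
    (hIndep : IndepFun (fun ω => fun i : {i : Fin m // i ∈ H0} => p i.1 ω)
      (fun ω => fun i : {i : Fin m // i ∉ H0} => p i.1 ω) P)
    {α : ℝ} (hα : α ∈ Set.Ioo (0 : ℝ) 1)
    (τ : ℕ → ℝ)
    (hτ01 : ∀ ℓ ∈ Finset.Icc 1 m, τ ℓ ∈ Set.Icc (0 : ℝ) 1)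
    (hτmono : ∀ ℓ ℓ', 1 ≤ ℓ → ℓ ≤ ℓ' → ℓ' ≤ m → τ ℓ ≤ τ ℓ') :
    P {ω | α < FDX.FDP H0 (FDX.sdReject (fun i => p i ω) τ)} ≤
      ((Finset.Icc 1 m).filter (fun ℓ => H0.card ≤ FDX.mfun α m ℓ)).sup
        (fun ℓ => P {ω | FDX.kfun α ℓ ≤ (H0.filter (fun i => p i ω ≤ τ ℓ)).card}) := by
  obtain ⟨hα0, hα1⟩ := hα
  rcases Nat.eq_zero_or_pos m with hm0 | hm
  · subst hm0
    have hempty : {ω | α < FDX.FDP H0 (FDX.sdReject (fun i => p i ω) τ)} = ∅ := by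
      ext ω
      simp only [Set.mem_setOf_eq, Set.mem_empty_iff_false, iff_false, not_lt]
      have hR : FDX.sdReject (fun i => p i ω) τ = (∅ : Finset (Fin 0)) :=
        Finset.eq_empty_of_forall_notMem (fun i _ => (Fin.elim0 i))
      rw [hR]
      simp [FDX.FDP]
      linarith
    rw [hempty, measure_empty]
    exact zero_le
  -- main case
  set Y : Ω → ({i : Fin m // i ∉ H0} → ℝ) := fun ω => fun i => p i.1 ω with hY
  set X : Ω → ({i : Fin m // i ∈ H0} → ℝ) := fun ω => fun i => p i.1 ω with hX
  set S : Finset ℕ := (Finset.Icc 1 m).filter (fun ℓ => H0.card ≤ FDX.mfun α m ℓ) with hS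
  set T : ℕ → Set ({i : Fin m // i ∈ H0} → ℝ) :=
    fun ℓ => {x | FDX.kfun α ℓ ≤ (Finset.univ.filter fun i => x i ≤ τ ℓ).card} with hT
  set G : ({i : Fin m // i ∉ H0} → ℝ) → ℕ := FDX.Lstar α τ H0 with hG
  have hYmeas : Measurable Y := measurable_pi_lambda _ (fun i => hmeas i.1)
  have hTmeas : ∀ ℓ, MeasurableSet (T ℓ) := by
    intro ℓ
    have h : T ℓ = (fun x : {i : Fin m // i ∈ H0} → ℝ =>
        (Finset.univ.filter fun i => x i ≤ τ ℓ).card) ⁻¹' (Set.Ici (FDX.kfun α ℓ)) := rfl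
    rw [h]
    exact FDX.meas_card (τ ℓ) measurableSet_Ici
  have hBev : ∀ ℓ, {ω | FDX.kfun α ℓ ≤ (H0.filter (fun i => p i ω ≤ τ ℓ)).card}
      = X ⁻¹' (T ℓ) := by
    intro ℓ
    ext ω
    simp only [Set.mem_setOf_eq, Set.mem_preimage, hT, hX]
    rw [FDX.mem_card_eq H0 (fun i => p i ω) (τ ℓ)]
  have hsub : {ω | α < FDX.FDP H0 (FDX.sdReject (fun i => p i ω) τ)}
      ⊆ ⋃ ℓ ∈ S, ((Y ⁻¹' (G ⁻¹' {ℓ})) ∩ (X ⁻¹' (T ℓ))) := by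
    intro ω hω
    obtain ⟨h1, h2, h3, h4⟩ := FDX.key hm hα0 hα1 τ hτmono H0 (fun i => p i ω) hω
    refine Set.mem_biUnion (show G (Y ω) ∈ S from ?_) ⟨rfl, ?_⟩
    · simp only [hS, Finset.mem_filter, Finset.mem_Icc]
      exact ⟨⟨h1, h2⟩, h3⟩
    · show X ω ∈ T (G (Y ω))
      simp only [hT, Set.mem_setOf_eq]
      rw [FDX.mem_card_eq H0 (fun i => p i ω) (τ (G (Y ω)))]
      exact h4
  refine le_trans (measure_mono hsub) ?_
  refine le_trans (measure_biUnion_finset_le S _) ?_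
  have hterm : ∀ ℓ ∈ S, P ((Y ⁻¹' (G ⁻¹' {ℓ})) ∩ (X ⁻¹' (T ℓ)))
      ≤ (S.sup (fun ℓ => P {ω | FDX.kfun α ℓ ≤ (H0.filter (fun i => p i ω ≤ τ ℓ)).card}))
        * P (Y ⁻¹' (G ⁻¹' {ℓ})) := by
    intro ℓ hℓ
    rw [Set.inter_comm,
      hIndep.measure_inter_preimage_eq_mul (T ℓ) (G ⁻¹' {ℓ}) (hTmeas ℓ)
        (FDX.Lstar_meas α τ H0 (measurableSet_singleton ℓ))]
    refine mul_le_mul_left ?_ _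
    rw [← hBev ℓ]
    exact Finset.le_sup (f := fun ℓ =>
      P {ω | FDX.kfun α ℓ ≤ (H0.filter (fun i => p i ω ≤ τ ℓ)).card}) hℓ
  refine le_trans (Finset.sum_le_sum hterm) ?_
  rw [← Finset.mul_sum]
  have hsum : ∑ ℓ ∈ S, P (Y ⁻¹' (G ⁻¹' {ℓ})) ≤ 1 := by
    have hdisj : (S : Set ℕ).PairwiseDisjoint (fun ℓ => Y ⁻¹' (G ⁻¹' {ℓ})) := by
      intro a _ b _ hab
      refine Set.disjoint_left.mpr fun ω h1 h2 => hab ?_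
      simp only [Set.mem_preimage, Set.mem_singleton_iff] at h1 h2
      rw [← h1, ← h2]
    rw [← measure_biUnion_finset hdisj
      (fun ℓ _ => hYmeas ((FDX.Lstar_meas α τ H0) (measurableSet_singleton ℓ)))]
    exact prob_le_one
  calc _ ≤ _ * 1 := mul_le_mul_right hsum _
    _ = _ := mul_one _
end

section
/- (FDX control of the heterogeneous Lehmann–Romano procedure.) Let (Ω, 𝒜, P) be a probability space, p_1,…,p_m : Ω → [0,1] measurable random variables, H0 ⊆ {1,…,m} and H1 = {1,…,m} ∖ H0, α, ζ ∈ (0,1). Assume (p_i)_{i∈H0} is independent of (p_i)_{i∈H1}, and that there are functions F_1,…,F_m : [0,1] → [0,1] with P(p_i ≤ t) ≤ F_i(t) for every i ∈ H0 and t ∈ [0,1]. Let 0 ≤ τ_1 ≤ … ≤ τ_m ≤ 1 be critical values such that for every ℓ ∈ {1,…,m}, Σ_{j=1}^{m(ℓ)} (F(τ_ℓ))_{(j)} ≤ ζ · (⌊αℓ⌋ + 1), where (F(τ_ℓ))_{(1)} ≥ … ≥ (F(τ_ℓ))_{(m)} are the values F_1(τ_ℓ),…,F_m(τ_ℓ)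 sorted nonincreasingly. Then the step-down rejection set R with critical values (τ_ℓ) satisfies P(FDP(R) > α) ≤ ζ. -/
open MeasureTheory ProbabilityTheory Finset

namespace FDXP
open FDX
open scoped ENNReal

/-- The property `Q(ℓ)`. -/
def Qp (α : ℝ) (S : ℕ → ℕ) (ℓ : ℕ) : Prop := ∀ ℓ', 1 ≤ ℓ' → ℓ' ≤ ℓ → ℓ' + 1 ≤ kfun α ℓ' + S ℓ'

/-- The alternative-measurable index. -/
noncomputable def Lfun (α : ℝ) (m : ℕ) (S : ℕ → ℕ) : ℕ :=
  min m (@Nat.findGreatest (Qp α S) (Classical.decPred _) m + 1)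

lemma Lfun_congr (α : ℝ) (m : ℕ) {S S' : ℕ → ℕ} (h : ∀ ℓ ≤ m, S ℓ = S' ℓ) :
    Lfun α m S = Lfun α m S' := by
  classical
  have hQ : ∀ ℓ ≤ m, Qp α S ℓ ↔ Qp α S' ℓ := by
    intro ℓ hℓ
    constructor <;> intro hq ℓ' h1 h2 <;> have := hq ℓ' h1 h2 <;>
      [rw [← h ℓ' (le_trans h2 hℓ)]; rw [h ℓ' (le_trans h2 hℓ)]] <;> exact this
  have key : @Nat.findGreatest (Qp α S') (Classical.decPred _) m
      = @Nat.findGreatest (Qp α S) (Classical.decPred _) m := by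
    obtain ⟨h1, h2, h3⟩ := (@Nat.findGreatest_eq_iff
      (@Nat.findGreatest (Qp α S) (Classical.decPred _) m) m (Qp α S) (Classical.decPred _)).1 rfl
    rw [Nat.findGreatest_eq_iff]
    refine ⟨h1, fun hne => (hQ _ h1).1 (h2 hne), fun n hn hnm hP => h3 hn hnm ((hQ n hnm).2 hP)⟩
  unfold Lfun; rw [key]

lemma kfun_pos (α : ℝ) (ℓ : ℕ) : 1 ≤ kfun α ℓ := Nat.succ_le_succ (Nat.zero_le _)

lemma arith (K d a v : ℕ) (h1 : K ≤ a) (h2 : a ≤ v) : K * (d + a) ≤ (d + K) * v := by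
  calc K * (d + a) = K * d + K * a := Nat.mul_add _ _ _
    _ ≤ a * d + K * a := Nat.add_le_add_right (Nat.mul_le_mul_right d h1) _
    _ = (d + K) * a := by ring
    _ ≤ (d + K) * v := Nat.mul_le_mul_left _ h2

/-- The pointwise (deterministic) core lemma. -/
lemma pointwise {m : ℕ} {α : ℝ} (hα0 : 0 < α) (hα1 : α < 1)
    (p : Fin m → ℝ) (τ : ℕ → ℝ) (H0 : Finset (Fin m))
    (hτmono : ∀ ℓ ℓ', 1 ≤ ℓ → ℓ ≤ ℓ' → ℓ' ≤ m → τ ℓ ≤ τ ℓ')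
    (h : α < FDP H0 (sdReject p τ)) :
    1 ≤ Lfun α m (fun ℓ => ((univ.filter (fun i => i ∉ H0 ∧ p i ≤ τ ℓ)).card)) ∧
    Lfun α m (fun ℓ => ((univ.filter (fun i => i ∉ H0 ∧ p i ≤ τ ℓ)).card)) ≤ m ∧
    kfun α (Lfun α m (fun ℓ => ((univ.filter (fun i => i ∉ H0 ∧ p i ≤ τ ℓ)).card)))
        * max H0.card (mfun α m (Lfun α m (fun ℓ => ((univ.filter (fun i => i ∉ H0 ∧ p i ≤ τ ℓ)).card))))
      ≤ mfun α m (Lfun α m (fun ℓ => ((univ.filter (fun i => i ∉ H0 ∧ p i ≤ τ ℓ)).card)))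
        * (univ.filter (fun i => i ∈ H0 ∧ p i ≤ τ (Lfun α m (fun ℓ => ((univ.filter (fun i => i ∉ H0 ∧ p i ≤ τ ℓ)).card))))).card := by
  classical
  set S : ℕ → ℕ := fun ℓ => ((univ.filter (fun i => i ∉ H0 ∧ p i ≤ τ ℓ)).card) with hS
  set V : ℕ → ℕ := fun ℓ => ((univ.filter (fun i => i ∈ H0 ∧ p i ≤ τ ℓ)).card) with hV
  -- countLe splits
  have hsplit : ∀ ℓ, countLe p (τ ℓ) = V ℓ + S ℓ := by
    intro ℓ
    unfold countLe
    rw [hV, hS]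
    rw [← Finset.card_union_of_disjoint]
    · congr 1
      ext i
      simp only [mem_union, mem_filter, mem_univ, true_and]
      tauto
    · rw [Finset.disjoint_left]
      intro a ha hb
      simp only [mem_filter] at ha hb
      exact hb.2.1 ha.2.1
  -- monotonicity
  have hVmono : ∀ ℓ ℓ', 1 ≤ ℓ → ℓ ≤ ℓ' → ℓ' ≤ m → V ℓ ≤ V ℓ' := by
    intro ℓ ℓ' h1 h2 h3
    apply Finset.card_le_card
    apply Finset.monotone_filter_right
    intro i _ hi
    exact ⟨hi.1, le_trans hi.2 (hτmono ℓ ℓ' h1 h2 h3)⟩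
  have hSmono : ∀ ℓ ℓ', 1 ≤ ℓ → ℓ ≤ ℓ' → ℓ' ≤ m → S ℓ ≤ S ℓ' := by
    intro ℓ ℓ' h1 h2 h3
    apply Finset.card_le_card
    apply Finset.monotone_filter_right
    intro i _ hi
    exact ⟨hi.1, le_trans hi.2 (hτmono ℓ ℓ' h1 h2 h3)⟩
  have hSm1 : ∀ ℓ, S ℓ ≤ m - H0.card := by
    intro ℓ
    have h1 : (univ.filter (fun i => i ∉ H0 ∧ p i ≤ τ ℓ)) ⊆ univ \ H0 := by
      intro i hi
      simp only [mem_filter] at hi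
      simp only [mem_sdiff, mem_univ, true_and]
      exact hi.2.1
    calc S ℓ ≤ (univ \ H0).card := Finset.card_le_card h1
      _ = m - H0.card := by
          rw [Finset.card_sdiff_of_subset (Finset.subset_univ H0), Finset.card_univ, Fintype.card_fin]
  -- step-down index facts
  set lh := sdIndex p τ with hlh
  have hfg := (@Nat.findGreatest_eq_iff lh m
    (fun ℓ => ∀ ℓ', 1 ≤ ℓ' → ℓ' ≤ ℓ → ℓ' ≤ countLe p (τ ℓ')) (Classical.decPred _)).1 hlh.symm
  obtain ⟨hlhm, hlhspec, hlhmax⟩ := hfg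
  -- R nonempty
  have hlh0 : lh ≠ 0 := by
    intro h0
    rw [FDP, sdReject, ← hlh, if_pos h0] at h
    simp at h
    linarith
  have hlh1 : 1 ≤ lh := Nat.one_le_iff_ne_zero.2 hlh0
  have hPp : ∀ ℓ', 1 ≤ ℓ' → ℓ' ≤ lh → ℓ' ≤ V ℓ' + S ℓ' := by
    intro ℓ' h1 h2
    rw [← hsplit]
    exact hlhspec hlh0 ℓ' h1 h2
  -- R and its cardinality
  have hR : sdReject p τ = univ.filter (fun i => p i ≤ τ lh) := by
    rw [sdReject, ← hlh, if_neg hlh0]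
  have hRcard : (sdReject p τ).card = countLe p (τ lh) := by rw [hR]; rfl
  have hClh_ge : lh ≤ countLe p (τ lh) := hlhspec hlh0 lh hlh1 le_rfl
  have hClh : countLe p (τ lh) = lh := by
    rcases Nat.lt_or_ge lh m with hlt | hge
    · by_contra hne
      have h2 : lh + 1 ≤ countLe p (τ lh) := by omega
      have h3 : ¬ (∀ ℓ', 1 ≤ ℓ' → ℓ' ≤ lh + 1 → ℓ' ≤ countLe p (τ ℓ')) :=
        hlhmax (Nat.lt_succ_self lh) hlt
      apply h3
      intro ℓ' h1 h2'
      rcases Nat.lt_or_ge ℓ' (lh + 1) with hc | hc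
      · exact hlhspec hlh0 ℓ' h1 (by omega)
      · have : ℓ' = lh + 1 := by omega
        subst this
        calc lh + 1 ≤ countLe p (τ lh) := h2
          _ ≤ countLe p (τ (lh+1)) := by
              apply Finset.card_le_card
              apply Finset.monotone_filter_right
              intro i _ hi
              exact le_trans hi (hτmono lh (lh+1) hlh1 (Nat.le_succ _) (by omega))
    · have : lh = m := le_antisymm hlhm hge
      have hle : countLe p (τ lh) ≤ m := by
        calc countLe p (τ lh) ≤ (univ : Finset (Fin m)).card := Finset.card_le_card (Finset.filter_subset _ _)
          _ = m := by rw [Finset.card_univ, Fintype.card_fin]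
      omega
  -- FDP value
  have hRH0 : (sdReject p τ ∩ H0).card = V lh := by
    rw [hR, hV]
    congr 1
    ext i
    simp only [mem_inter, mem_filter, mem_univ, true_and]
    tauto
  have hVlh : kfun α lh ≤ V lh := by
    rw [FDP, hRH0, hRcard, hClh] at h
    have hmax : max ((lh : ℝ)) 1 = (lh : ℝ) := by
      apply max_eq_left
      exact_mod_cast hlh1
    rw [hmax] at h
    have hpos : (0:ℝ) < lh := by exact_mod_cast hlh1
    have h2 : α * lh < V lh := by
      rw [lt_div_iff₀ hpos] at h
      linarith
    have h3 : ⌊α * lh⌋₊ < V lh := by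
      apply Nat.floor_lt (by positivity) |>.2
      exact h2
    unfold kfun
    omega
  -- Lfun facts
  set L' := @Nat.findGreatest (Qp α S) (Classical.decPred _) m with hL'
  set L := Lfun α m S with hLdef
  have hLmin : L = min m (L' + 1) := rfl
  have hfgQ := (@Nat.findGreatest_eq_iff L' m (Qp α S) (Classical.decPred _)).1 hL'.symm
  obtain ⟨hL'm, hL'spec, hL'max⟩ := hfgQ
  have hQL' : Qp α S L' := by
    rcases Nat.eq_zero_or_pos L' with h0 | h0
    · intro ℓ' h1 h2; omega
    · exact hL'spec (by omega)
  have hm1 : 1 ≤ m := le_trans hlh1 hlhm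
  have hL1 : 1 ≤ L := by rw [hLmin]; omega
  have hLm : L ≤ m := by rw [hLmin]; omega
  -- k increments: not needed; Step: L ≤ lh
  have hLlh : L ≤ lh := by
    by_contra hc
    push_neg at hc
    have hlhL' : lh ≤ L' := by rw [hLmin] at hc; omega
    have hQlh : lh + 1 ≤ kfun α lh + S lh := hQL' lh hlh1 hlhL'
    have hlhm' : lh < m := lt_of_lt_of_le hc hLm
    have hnP : ¬ (∀ ℓ', 1 ≤ ℓ' → ℓ' ≤ lh + 1 → ℓ' ≤ countLe p (τ ℓ')) :=
      hlhmax (Nat.lt_succ_self lh) hlhm'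
    push_neg at hnP
    obtain ⟨ℓ', h1, h2, h3⟩ := hnP
    have hℓ'eq : ℓ' = lh + 1 := by
      rcases Nat.lt_or_ge ℓ' (lh+1) with hc2 | hc2
      · exact absurd (hlhspec hlh0 ℓ' h1 (by omega)) (by omega)
      · omega
    subst hℓ'eq
    rw [hsplit] at h3
    have hV2 : V lh ≤ V (lh+1) := hVmono lh (lh+1) hlh1 (Nat.le_succ _) (by omega)
    have hS2 : S lh ≤ S (lh+1) := hSmono lh (lh+1) hlh1 (Nat.le_succ _) (by omega)
    omega
  -- V L + S L ≥ L
  have hVSL : L ≤ V L + S L := hPp L hL1 hLlh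
  -- V L ≥ kfun α L
  have hVL_k : kfun α L ≤ V L := by
    rcases Nat.lt_or_ge L m with hlt | hge
    · have hLL' : L = L' + 1 := by rw [hLmin] at hlt ⊢; omega
      have hnQ : ¬ Qp α S L := by
        apply hL'max
        · omega
        · omega
      simp only [Qp, not_forall] at hnQ
      obtain ⟨ℓ', h1, h2, h3⟩ := hnQ
      push_neg at h3
      have hℓ'eq : ℓ' = L := by
        rcases Nat.lt_or_ge ℓ' L with hc2 | hc2
        · have := hQL' ℓ' h1 (by omega)
          omega
        · omega
      subst hℓ'eq
      omega
    · have hLm' : L = m := le_antisymm hLm hge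
      have hlhm' : lh = m := le_antisymm hlhm (by omega)
      have : V L = V lh := by rw [hLm', hlhm']
      have : kfun α L = kfun α lh := by rw [hLm', hlhm']
      omega
  -- final arithmetic
  refine ⟨hL1, hLm, ?_⟩
  have hm0 : H0.card ≤ m := by
    calc H0.card ≤ (univ : Finset (Fin m)).card := Finset.card_le_card (Finset.subset_univ _)
      _ = m := by rw [Finset.card_univ, Fintype.card_fin]
  set m0 := H0.card with hm0def
  set K := kfun α L with hK
  have hMdef : mfun α m L = (m - L) + K := by
    rw [hK]; unfold mfun kfun; omega
  rcases le_or_gt m0 (mfun α m L) with hcase | hcase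
  · rw [max_eq_right hcase]
    calc K * mfun α m L = mfun α m L * K := Nat.mul_comm _ _
      _ ≤ mfun α m L * V L := Nat.mul_le_mul_left _ hVL_k
  · rw [max_eq_left (le_of_lt hcase)]
    have hcase' : (m - L) + K < m0 := by rw [hMdef] at hcase; exact hcase
    have hKL : K + (m - m0) + 1 ≤ L := by omega
    have hSL : S L ≤ m - m0 := hSm1 L
    have ha2 : L - (m - m0) ≤ V L := by omega
    have ha1 : K ≤ L - (m - m0) := by omega
    have hsplit2 : m0 = (m - L) + (L - (m - m0)) := by omega
    rw [hMdef, hsplit2]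
    exact arith K (m - L) (L - (m - m0)) (V L) ha1 ha2

/-! ### Rearrangement lemmas -/

lemma descSort_eq {m : ℕ} (v : Fin m → ℝ) (j : Fin m) :
    descSort v j = v (Tuple.sort (fun i => -v i) j) := rfl

lemma descSort_antitone {m : ℕ} (v : Fin m → ℝ) : Antitone (descSort v) := by
  intro j j' hle
  have hmono := Tuple.monotone_sort (fun i => -v i)
  have := hmono hle
  simp only [Function.comp_apply] at this
  rw [descSort_eq, descSort_eq]
  linarith

lemma le_emb {c m : ℕ} (f : Fin c → Fin m) (hf : StrictMono f) (k : Fin c) :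
    (k : ℕ) ≤ (f k : ℕ) := by
  suffices H : ∀ j : ℕ, ∀ k : Fin c, (k : ℕ) = j → j ≤ (f k : ℕ) from H _ k rfl
  intro j
  induction j with
  | zero => intro k _; omega
  | succ j ih =>
    intro k hk
    have hj : j < c := by omega
    have hlt : (⟨j, hj⟩ : Fin c) < k := by rw [Fin.lt_def]; simp; omega
    have h2 := hf hlt
    have hih := ih ⟨j, hj⟩ rfl
    rw [Fin.lt_def] at h2
    omega

lemma card_filter_lt {m : ℕ} {n : ℕ} (h : n ≤ m) :
    (univ.filter (fun j : Fin m => (j : ℕ) < n)).card = n := by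
  have himg : (univ.filter (fun j : Fin m => (j : ℕ) < n)).image (Fin.val) = Finset.range n := by
    ext a
    simp only [Finset.mem_image, Finset.mem_filter, Finset.mem_univ, true_and, Finset.mem_range]
    constructor
    · rintro ⟨j, hj, rfl⟩; exact hj
    · intro ha; exact ⟨⟨a, lt_of_lt_of_le ha h⟩, ha, rfl⟩
  have := Finset.card_image_of_injective
    (univ.filter (fun j : Fin m => (j : ℕ) < n)) (Fin.val_injective)
  rw [himg, Finset.card_range] at this
  omega

lemma sum_subset_le_descSort {m : ℕ} (v : Fin m → ℝ) (s : Finset (Fin m)) :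
    ∑ i ∈ s, v i ≤ ∑ j ∈ univ.filter (fun j : Fin m => (j : ℕ) < s.card), descSort v j := by
  classical
  set σ := Tuple.sort (fun i => -v i) with hσ
  set s' := s.image σ.symm with hs'
  have hinj : Function.Injective (σ.symm) := Equiv.injective _
  have hcard : s'.card = s.card := Finset.card_image_of_injective _ hinj
  have hcm : s.card ≤ m := by
    calc s.card ≤ (univ : Finset (Fin m)).card := Finset.card_le_card (Finset.subset_univ _)
      _ = m := by rw [Finset.card_univ, Fintype.card_fin]
  have h1 : ∑ i ∈ s, v i = ∑ j ∈ s', descSort v j := by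
    rw [hs', Finset.sum_image (fun a _ b _ h => hinj h)]
    apply Finset.sum_congr rfl
    intro i _
    rw [descSort_eq, ← hσ, Equiv.apply_symm_apply]
  rw [h1]
  set e := s'.orderEmbOfFin hcard with he
  have himg : s' = Finset.univ.image (fun k => e k) := by
    ext a
    simp only [Finset.mem_image, Finset.mem_univ, true_and]
    constructor
    · intro ha
      have : a ∈ Set.range e := by rw [Finset.range_orderEmbOfFin]; exact ha
      obtain ⟨k, hk⟩ := this
      exact ⟨k, hk⟩
    · rintro ⟨k, rfl⟩
      have : e k ∈ Set.range e := Set.mem_range_self k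
      rw [Finset.range_orderEmbOfFin] at this
      exact this
  have h2 : ∑ j ∈ s', descSort v j = ∑ k : Fin s.card, descSort v (e k) := by
    rw [himg, Finset.sum_image (fun a _ b _ h => (e.injective h))]
  rw [h2]
  have h3 : ∀ k : Fin s.card, descSort v (e k) ≤ descSort v ⟨k, lt_of_lt_of_le k.isLt hcm⟩ := by
    intro k
    apply descSort_antitone
    rw [Fin.le_def]
    exact le_emb (fun k => e k) (e.strictMono) k
  calc ∑ k : Fin s.card, descSort v (e k)
      ≤ ∑ k : Fin s.card, descSort v ⟨k, lt_of_lt_of_le k.isLt hcm⟩ :=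
        Finset.sum_le_sum (fun k _ => h3 k)
    _ = ∑ j ∈ univ.filter (fun j : Fin m => (j : ℕ) < s.card), descSort v j := by
        apply Finset.sum_bij (i := fun (k : Fin s.card) (_ : k ∈ univ) => (⟨(k : ℕ), lt_of_lt_of_le k.isLt hcm⟩ : Fin m))
        · intro a _
          simp only [Finset.mem_filter, Finset.mem_univ, true_and]
          exact a.isLt
        · intro a _ b _ hab
          have : (a : ℕ) = (b : ℕ) := by
            have := congrArg (Fin.val) hab
            simpa using this
          exact Fin.ext this
        · intro j hj
          simp only [Finset.mem_filter, Finset.mem_univ, true_and] at hj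
          exact ⟨⟨(j : ℕ), hj⟩, Finset.mem_univ _, rfl⟩
        · intro a _
          rfl

/-- Key consequence of the critical-value condition via rearrangement. -/
lemma F_sum_bound {m : ℕ} {α ζ : ℝ} (hα0 : 0 < α) (hα1 : α < 1) (hζ0 : 0 ≤ ζ)
    (v : Fin m → ℝ) (hv : ∀ i, 0 ≤ v i) (H0 : Finset (Fin m)) (ℓ : ℕ)
    (hℓ1 : 1 ≤ ℓ) (hℓm : ℓ ≤ m)
    (hcrit : ∑ j ∈ univ.filter (fun j : Fin m => (j : ℕ) < mfun α m ℓ), descSort v j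
      ≤ ζ * (kfun α ℓ : ℝ)) :
    (mfun α m ℓ : ℝ) * ∑ i ∈ H0, v i
      ≤ ζ * ((kfun α ℓ * max H0.card (mfun α m ℓ) : ℕ) : ℝ) := by
  classical
  set M := mfun α m ℓ with hM
  set K := kfun α ℓ with hK
  have hd0 : ∀ j, 0 ≤ descSort v j := fun j => hv _
  have hM1 : 1 ≤ M := by rw [hM]; unfold mfun; omega
  have hMm : M ≤ m := by
    have hfl : ⌊α * (ℓ:ℝ)⌋₊ < ℓ := by
      rw [Nat.floor_lt (by positivity)]
      calc α * (ℓ:ℝ) < 1 * (ℓ:ℝ) := by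
            apply mul_lt_mul_of_pos_right hα1
            exact_mod_cast hℓ1
        _ = (ℓ:ℝ) := one_mul _
    rw [hM]; unfold mfun; omega
  set m0 := H0.card with hm0
  have hm0m : m0 ≤ m := by
    calc m0 ≤ (univ : Finset (Fin m)).card := Finset.card_le_card (Finset.subset_univ _)
      _ = m := by rw [Finset.card_univ, Fintype.card_fin]
  have hA : ∑ i ∈ H0, v i ≤ ∑ j ∈ univ.filter (fun j : Fin m => (j : ℕ) < m0), descSort v j :=
    sum_subset_le_descSort v H0
  rcases le_or_gt m0 M with hcase | hcase
  · -- m0 ≤ M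
    have hTsub : ∑ j ∈ univ.filter (fun j : Fin m => (j : ℕ) < m0), descSort v j
        ≤ ∑ j ∈ univ.filter (fun j : Fin m => (j : ℕ) < M), descSort v j := by
      apply Finset.sum_le_sum_of_subset_of_nonneg
      · apply Finset.monotone_filter_right
        intro j hj
        omega
      · intro j _ _
        exact hd0 j
    have hsum : ∑ i ∈ H0, v i ≤ ζ * (K : ℝ) := le_trans hA (le_trans hTsub hcrit)
    have hmax : max m0 M = M := max_eq_right hcase
    rw [hmax]
    push_cast
    calc (M : ℝ) * ∑ i ∈ H0, v i ≤ (M : ℝ) * (ζ * K) := by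
          apply mul_le_mul_of_nonneg_left hsum (by positivity)
      _ = ζ * ((K : ℝ) * M) := by ring
  · -- M < m0
    have hmax : max m0 M = m0 := max_eq_left (le_of_lt hcase)
    rw [hmax]
    set dM : Fin m := ⟨M - 1, by omega⟩ with hdM
    have hsplitF : univ.filter (fun j : Fin m => (j : ℕ) < m0)
        = univ.filter (fun j : Fin m => (j : ℕ) < M)
          ∪ univ.filter (fun j : Fin m => M ≤ (j : ℕ) ∧ (j : ℕ) < m0) := by
      ext j
      simp only [Finset.mem_union, Finset.mem_filter, Finset.mem_univ, true_and]
      omega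
    have hdisj : Disjoint (univ.filter (fun j : Fin m => (j : ℕ) < M))
        (univ.filter (fun j : Fin m => M ≤ (j : ℕ) ∧ (j : ℕ) < m0)) := by
      rw [Finset.disjoint_left]
      intro a ha hb
      simp only [Finset.mem_filter, Finset.mem_univ, true_and] at ha hb
      omega
    have hTsplit : ∑ j ∈ univ.filter (fun j : Fin m => (j : ℕ) < m0), descSort v j
        = ∑ j ∈ univ.filter (fun j : Fin m => (j : ℕ) < M), descSort v j
          + ∑ j ∈ univ.filter (fun j : Fin m => M ≤ (j : ℕ) ∧ (j : ℕ) < m0), descSort v j := by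
      rw [hsplitF, Finset.sum_union hdisj]
    -- extra terms bound
    have hcardE : (univ.filter (fun j : Fin m => M ≤ (j : ℕ) ∧ (j : ℕ) < m0)).card ≤ m0 - M := by
      have himg := Finset.card_image_of_injective
        (univ.filter (fun j : Fin m => M ≤ (j : ℕ) ∧ (j : ℕ) < m0)) (Fin.val_injective)
      have hsub : (univ.filter (fun j : Fin m => M ≤ (j : ℕ) ∧ (j : ℕ) < m0)).image Fin.val
          ⊆ Finset.Ico M m0 := by
        intro a ha
        simp only [Finset.mem_image, Finset.mem_filter, Finset.mem_univ, true_and] at ha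
        obtain ⟨j, hj, rfl⟩ := ha
        simp only [Finset.mem_Ico]
        exact hj
      have := Finset.card_le_card hsub
      rw [himg, Nat.card_Ico] at this
      exact this
    have hEbound : ∑ j ∈ univ.filter (fun j : Fin m => M ≤ (j : ℕ) ∧ (j : ℕ) < m0), descSort v j
        ≤ ((m0 - M : ℕ) : ℝ) * descSort v dM := by
      calc ∑ j ∈ univ.filter (fun j : Fin m => M ≤ (j : ℕ) ∧ (j : ℕ) < m0), descSort v j
          ≤ (univ.filter (fun j : Fin m => M ≤ (j : ℕ) ∧ (j : ℕ) < m0)).card • descSort v dM := by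
            apply Finset.sum_le_card_nsmul
            intro j hj
            simp only [Finset.mem_filter, Finset.mem_univ, true_and] at hj
            apply descSort_antitone
            rw [Fin.le_def, hdM]
            simp
            omega
        _ ≤ ((m0 - M : ℕ) : ℝ) * descSort v dM := by
            rw [nsmul_eq_mul]
            apply mul_le_mul_of_nonneg_right _ (hd0 dM)
            exact_mod_cast hcardE
    -- M * dM ≤ T_M
    have hMdM : (M : ℝ) * descSort v dM
        ≤ ∑ j ∈ univ.filter (fun j : Fin m => (j : ℕ) < M), descSort v j := by
      have hcard : (univ.filter (fun j : Fin m => (j : ℕ) < M)).card = M := card_filter_lt hMm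
      calc (M : ℝ) * descSort v dM
          = (univ.filter (fun j : Fin m => (j : ℕ) < M)).card • descSort v dM := by
            rw [hcard, nsmul_eq_mul]
        _ ≤ ∑ j ∈ univ.filter (fun j : Fin m => (j : ℕ) < M), descSort v j := by
            apply Finset.card_nsmul_le_sum
            intro j hj
            simp only [Finset.mem_filter, Finset.mem_univ, true_and] at hj
            apply descSort_antitone
            rw [Fin.le_def, hdM]
            simp
            omega
    -- assemble
    set TM := ∑ j ∈ univ.filter (fun j : Fin m => (j : ℕ) < M), descSort v j with hTM
    have hTM0 : 0 ≤ TM := Finset.sum_nonneg (fun j _ => hd0 j)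
    have hd0' : 0 ≤ descSort v dM := hd0 dM
    have hMpos : (0:ℝ) < (M : ℝ) := by exact_mod_cast hM1
    have hm0M : ((m0 - M : ℕ) : ℝ) = (m0 : ℝ) - (M : ℝ) := by
      rw [Nat.cast_sub (le_of_lt hcase)]
    have hsum2 : ∑ i ∈ H0, v i ≤ TM + ((m0:ℝ) - M) * descSort v dM := by
      rw [← hm0M]
      calc ∑ i ∈ H0, v i ≤ _ := hA
        _ = TM + _ := hTsplit
        _ ≤ TM + ((m0 - M : ℕ) : ℝ) * descSort v dM := by linarith [hEbound]
    have hgoal : (M : ℝ) * ∑ i ∈ H0, v i ≤ (m0 : ℝ) * TM := by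
      have h1 : (M:ℝ) * ∑ i ∈ H0, v i ≤ (M:ℝ) * (TM + ((m0:ℝ) - M) * descSort v dM) :=
        mul_le_mul_of_nonneg_left hsum2 (le_of_lt hMpos)
      have h2 : ((m0:ℝ) - M) * ((M:ℝ) * descSort v dM) ≤ ((m0:ℝ) - M) * TM := by
        apply mul_le_mul_of_nonneg_left hMdM
        have : (M:ℝ) ≤ (m0:ℝ) := by exact_mod_cast le_of_lt hcase
        linarith
      nlinarith [h1, h2]
    calc (M : ℝ) * ∑ i ∈ H0, v i ≤ (m0 : ℝ) * TM := hgoal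
      _ ≤ (m0 : ℝ) * (ζ * K) := by
          apply mul_le_mul_of_nonneg_left hcrit (by positivity)
      _ = ζ * ((K : ℝ) * m0) := by ring
      _ = ζ * ((K * m0 : ℕ) : ℝ) := by push_cast; ring

/-! ### Counting and measurability lemmas -/

lemma card_subtype_count {m : ℕ} (q : Fin m → Prop) [DecidablePred q]
    [inst : Fintype {i : Fin m // q i}]
    (r : Fin m → Prop) [DecidablePred r] :
    ((@univ {i : Fin m // q i} inst).filter (fun j : {i : Fin m // q i} => r j.1)).card
      = (univ.filter (fun i : Fin m => q i ∧ r i)).card := by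
  apply Finset.card_bij (i := fun (j : {i : Fin m // q i}) (_ : j ∈ univ.filter (fun j => r j.1)) => j.1)
  · intro a ha
    simp only [Finset.mem_filter, Finset.mem_univ, true_and] at ha ⊢
    exact ⟨a.2, ha⟩
  · intro a _ b _ hab
    exact Subtype.ext hab
  · intro b hb
    simp only [Finset.mem_filter, Finset.mem_univ, true_and] at hb
    exact ⟨⟨b, hb.1⟩, by simp only [Finset.mem_filter, Finset.mem_univ, true_and]; exact hb.2, rfl⟩

lemma filter_mem_eq {m : ℕ} (H0 : Finset (Fin m)) (r : Fin m → Prop) [DecidablePred r] :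
    H0.filter r = univ.filter (fun i : Fin m => i ∈ H0 ∧ r i) := by
  ext i
  simp only [Finset.mem_filter, Finset.mem_univ, true_and]

lemma measurable_cnt {κ : Type*} [Fintype κ] (t : ℝ) :
    Measurable (fun y : κ → ℝ => (univ.filter (fun j => y j ≤ t)).card) := by
  classical
  have : (fun y : κ → ℝ => (univ.filter (fun j => y j ≤ t)).card)
      = fun y => ∑ j : κ, if y j ≤ t then 1 else 0 := by
    funext y; rw [Finset.card_filter]
  rw [this]
  apply Finset.measurable_sum
  intro j _
  exact Measurable.ite (measurableSet_le (measurable_pi_apply j) measurable_const)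
    measurable_const measurable_const

open MeasureTheory in
/-- Counting Markov inequality. -/
lemma markov_bound {Ω : Type*} [MeasurableSpace Ω] (P : MeasureTheory.Measure Ω)
    {m : ℕ} (p : Fin m → Ω → ℝ) (hmeas : ∀ i, Measurable (p i)) (H0 : Finset (Fin m))
    (t : ℝ) (c M : ℕ) (B : Set Ω) (hB : MeasurableSet B)
    (hBsub : ∀ ω ∈ B, c ≤ M * (H0.filter (fun i => p i ω ≤ t)).card) :
    (c : ℝ≥0∞) * P B ≤ (M : ℝ≥0∞) * ∑ i ∈ H0, P {ω | p i ω ≤ t} := by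
  classical
  have hAmeas : ∀ i : Fin m, MeasurableSet {ω | p i ω ≤ t} :=
    fun i => measurableSet_le (hmeas i) measurable_const
  have key : ∀ ω, (((H0.filter (fun i => p i ω ≤ t)).card : ℕ) : ℝ≥0∞)
      = ∑ i ∈ H0, Set.indicator {ω' | p i ω' ≤ t} (fun _ => (1:ℝ≥0∞)) ω := by
    intro ω
    rw [Finset.card_filter]
    push_cast
    apply Finset.sum_congr rfl
    intro i _
    rw [Set.indicator_apply]
    by_cases h : p i ω ≤ t
    · rw [if_pos h, if_pos (by exact h)]
    · rw [if_neg h, if_neg (by exact h)]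
  have hcntmeas : Measurable (fun ω => (((H0.filter (fun i => p i ω ≤ t)).card : ℕ) : ℝ≥0∞)) := by
    simp only [key]
    apply Finset.measurable_sum
    intro i _
    exact (measurable_const.indicator (hAmeas i))
  calc (c:ℝ≥0∞) * P B = ∫⁻ ω, B.indicator (fun _ => (c:ℝ≥0∞)) ω ∂P := by
        rw [MeasureTheory.lintegral_indicator_const hB]
    _ ≤ ∫⁻ ω, (M:ℝ≥0∞) * (((H0.filter (fun i => p i ω ≤ t)).card : ℕ) : ℝ≥0∞) ∂P := by
        apply MeasureTheory.lintegral_mono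
        intro ω
        rw [Set.indicator_apply]
        split_ifs with hω
        · have h2 := hBsub ω hω
          calc (c:ℝ≥0∞) ≤ ((M * (H0.filter (fun i => p i ω ≤ t)).card : ℕ) : ℝ≥0∞) := by
                exact_mod_cast h2
            _ = _ := by push_cast; ring
        · exact zero_le
    _ = (M:ℝ≥0∞) * ∫⁻ ω, (((H0.filter (fun i => p i ω ≤ t)).card : ℕ) : ℝ≥0∞) ∂P := by
        rw [MeasureTheory.lintegral_const_mul _ hcntmeas]
    _ = (M:ℝ≥0∞) * ∑ i ∈ H0, P {ω | p i ω ≤ t} := by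
        congr 1
        calc ∫⁻ ω, (((H0.filter (fun i => p i ω ≤ t)).card : ℕ) : ℝ≥0∞) ∂P
            = ∫⁻ ω, ∑ i ∈ H0, Set.indicator {ω' | p i ω' ≤ t} (fun _ => (1:ℝ≥0∞)) ω ∂P := by
              simp only [key]
          _ = ∑ i ∈ H0, ∫⁻ ω, Set.indicator {ω' | p i ω' ≤ t} (fun _ => (1:ℝ≥0∞)) ω ∂P :=
              MeasureTheory.lintegral_finset_sum _ (fun i _ => measurable_const.indicator (hAmeas i))
          _ = ∑ i ∈ H0, P {ω | p i ω ≤ t} := by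
              apply Finset.sum_congr rfl
              intro i _
              rw [MeasureTheory.lintegral_indicator_const (hAmeas i), one_mul]

end FDXP

/-- FDX control of the heterogeneous Lehmann–Romano procedure. If the null
p-value family is independent of the alternative one, `P(p_i ≤ t) ≤ F_i(t)` for nulls, and the
nondecreasing critical values satisfy `∑_{j=1}^{m(ℓ)} (F(τ_ℓ))_{(j)} ≤ ζ(⌊αℓ⌋+1)` for all `ℓ`,
then the step-down procedure satisfies `P(FDP > α) ≤ ζ`. -/
theorem stmt_2
    {Ω : Type*} [MeasurableSpace Ω] (P : MeasureTheory.Measure Ω) [IsProbabilityMeasure P]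
    {m : ℕ} (p : Fin m → Ω → ℝ)
    (hmeas : ∀ i, Measurable (p i))
    (hp01 : ∀ i ω, p i ω ∈ Set.Icc (0 : ℝ) 1)
    (H0 : Finset (Fin m))
    {α ζ : ℝ} (hα : α ∈ Set.Ioo (0 : ℝ) 1) (hζ : ζ ∈ Set.Ioo (0 : ℝ) 1)
    (hIndep : IndepFun (fun ω => fun i : {i : Fin m // i ∈ H0} => p i.1 ω)
      (fun ω => fun i : {i : Fin m // i ∉ H0} => p i.1 ω) P)
    (F : Fin m → ℝ → ℝ)
    (hF01 : ∀ i, ∀ t ∈ Set.Icc (0 : ℝ) 1, F i t ∈ Set.Icc (0 : ℝ) 1)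
    (hF : ∀ i ∈ H0, ∀ t ∈ Set.Icc (0 : ℝ) 1, P {ω | p i ω ≤ t} ≤ ENNReal.ofReal (F i t))
    (τ : ℕ → ℝ)
    (hτ01 : ∀ ℓ ∈ Finset.Icc 1 m, τ ℓ ∈ Set.Icc (0 : ℝ) 1)
    (hτmono : ∀ ℓ ℓ', 1 ≤ ℓ → ℓ ≤ ℓ' → ℓ' ≤ m → τ ℓ ≤ τ ℓ')
    (hcrit : ∀ ℓ ∈ Finset.Icc 1 m,
      ∑ j ∈ Finset.univ.filter (fun j : Fin m => (j : ℕ) < FDX.mfun α m ℓ),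
          FDX.descSort (fun i => F i (τ ℓ)) j ≤ ζ * (FDX.kfun α ℓ : ℝ)) :
    P {ω | α < FDX.FDP H0 (FDX.sdReject (fun i => p i ω) τ)} ≤ ENNReal.ofReal ζ := by
  classical
  obtain ⟨hα0, hα1⟩ := hα
  obtain ⟨hζ0, hζ1⟩ := hζ
  set X : Ω → ({i : Fin m // i ∈ H0} → ℝ) := fun ω => fun i : {i : Fin m // i ∈ H0} => p i.1 ω
    with hXdef
  set Y : Ω → ({i : Fin m // i ∉ H0} → ℝ) := fun ω => fun i : {i : Fin m // i ∉ H0} => p i.1 ω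
    with hYdef
  have hX : Measurable X := measurable_pi_lambda _ (fun i => hmeas i.1)
  have hY : Measurable Y := measurable_pi_lambda _ (fun i => hmeas i.1)
  set φ : ({i : Fin m // i ∉ H0} → ℝ) → (Fin (m+1) → ℕ) :=
    fun y j => (univ.filter (fun i : {i : Fin m // i ∉ H0} => y i ≤ τ (j : ℕ))).card with hφdef
  have hφmeas : Measurable φ := measurable_pi_lambda _ (fun j => FDXP.measurable_cnt (τ (j : ℕ)))
  set ψ : (Fin (m+1) → ℕ) → ℕ :=
    fun w => FDXP.Lfun α m (fun ℓ => if h : ℓ < m + 1 then w ⟨ℓ, h⟩ else 0) with hψdef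
  have hψmeas : Measurable ψ := measurable_of_countable _
  set g : ({i : Fin m // i ∉ H0} → ℝ) → ℕ := ψ ∘ φ with hgdef
  have hg : Measurable g := hψmeas.comp hφmeas
  set A : ℕ → Set Ω := fun ℓ => Y ⁻¹' (g ⁻¹' {ℓ}) with hAdef
  set c : ℕ → ℕ := fun ℓ => FDX.kfun α ℓ * max H0.card (FDX.mfun α m ℓ) with hcdef
  set SB : ℕ → Set ({i : Fin m // i ∈ H0} → ℝ) := fun ℓ =>
    {x | c ℓ ≤ FDX.mfun α m ℓ * (univ.filter (fun i : {i : Fin m // i ∈ H0} => x i ≤ τ ℓ)).card}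
    with hSBdef
  have hSBmeas : ∀ ℓ, MeasurableSet (SB ℓ) := by
    intro ℓ
    have heq : SB ℓ = (fun x : {i : Fin m // i ∈ H0} → ℝ =>
        (univ.filter (fun i => x i ≤ τ ℓ)).card) ⁻¹' {n : ℕ | c ℓ ≤ FDX.mfun α m ℓ * n} := rfl
    rw [heq]
    exact (FDXP.measurable_cnt (τ ℓ)) MeasurableSet.of_discrete
  set B : ℕ → Set Ω := fun ℓ => X ⁻¹' (SB ℓ) with hBdef
  -- inclusion in the union
  have hincl : {ω | α < FDX.FDP H0 (FDX.sdReject (fun i => p i ω) τ)}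
      ⊆ ⋃ ℓ ∈ Finset.Icc 1 m, A ℓ ∩ B ℓ := by
    intro ω hω
    simp only [Set.mem_setOf_eq] at hω
    obtain ⟨hL1, hLm, hbound⟩ := FDXP.pointwise hα0 hα1 (fun i => p i ω) τ H0 hτmono hω
    set S : ℕ → ℕ := fun ℓ =>
      (univ.filter (fun i : Fin m => i ∉ H0 ∧ p i ω ≤ τ ℓ)).card with hSdef
    set L := FDXP.Lfun α m S with hLdef
    have hgY : g (Y ω) = L := by
      rw [hgdef, Function.comp_apply, hψdef]
      apply FDXP.Lfun_congr
      intro ℓ hℓ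
      rw [dif_pos (by omega : ℓ < m + 1)]
      calc φ (Y ω) ⟨ℓ, by omega⟩
          = (univ.filter (fun i : {i : Fin m // i ∉ H0} => p i.1 ω ≤ τ ℓ)).card := rfl
        _ = (univ.filter (fun i : Fin m => i ∉ H0 ∧ p i ω ≤ τ ℓ)).card :=
            FDXP.card_subtype_count (fun i => i ∉ H0) (fun i => p i ω ≤ τ ℓ)
        _ = S ℓ := rfl
    have hmem : ω ∈ A L ∩ B L := by
      constructor
      · simp only [hAdef, Set.mem_preimage, Set.mem_singleton_iff]
        exact hgY
      · simp only [hBdef, hSBdef, Set.mem_preimage, Set.mem_setOf_eq]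
        have hcnt : (univ.filter (fun i : {i : Fin m // i ∈ H0} => X ω i ≤ τ L)).card
            = (univ.filter (fun i : Fin m => i ∈ H0 ∧ p i ω ≤ τ L)).card :=
          FDXP.card_subtype_count (fun i => i ∈ H0) (fun i => p i ω ≤ τ L)
        rw [hcnt]
        exact hbound
    exact Set.mem_biUnion (Finset.mem_Icc.2 ⟨hL1, hLm⟩) hmem
  -- per-level bound
  have hstep : ∀ ℓ ∈ Finset.Icc 1 m, P (A ℓ ∩ B ℓ) ≤ ENNReal.ofReal ζ * P (A ℓ) := by
    intro ℓ hℓ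
    obtain ⟨hℓ1, hℓm⟩ := Finset.mem_Icc.1 hℓ
    have hτℓ : τ ℓ ∈ Set.Icc (0:ℝ) 1 := hτ01 ℓ hℓ
    -- independence
    have hABeq : A ℓ ∩ B ℓ = X ⁻¹' (SB ℓ) ∩ Y ⁻¹' (g ⁻¹' {ℓ}) := Set.inter_comm _ _
    have hiff := hIndep.measure_inter_preimage_eq_mul (SB ℓ) (g ⁻¹' {ℓ})
      (hSBmeas ℓ) (hg (measurableSet_singleton ℓ))
    -- Markov
    have hXB : ∀ ω ∈ X ⁻¹' (SB ℓ),
        c ℓ ≤ FDX.mfun α m ℓ * (H0.filter (fun i => p i ω ≤ τ ℓ)).card := by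
      intro ω hω
      simp only [hSBdef, Set.mem_preimage, Set.mem_setOf_eq] at hω
      have hcnt : (univ.filter (fun i : {i : Fin m // i ∈ H0} => X ω i ≤ τ ℓ)).card
          = (univ.filter (fun i : Fin m => i ∈ H0 ∧ p i ω ≤ τ ℓ)).card :=
        FDXP.card_subtype_count (fun i => i ∈ H0) (fun i => p i ω ≤ τ ℓ)
      rw [FDXP.filter_mem_eq]
      rw [hcnt] at hω
      exact hω
    have hmark := FDXP.markov_bound P p hmeas H0 (τ ℓ) (c ℓ) (FDX.mfun α m ℓ)
      (X ⁻¹' (SB ℓ)) (hX (hSBmeas ℓ)) hXB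
    have hFsum : ∑ i ∈ H0, P {ω | p i ω ≤ τ ℓ} ≤ ENNReal.ofReal (∑ i ∈ H0, F i (τ ℓ)) := by
      rw [ENNReal.ofReal_sum_of_nonneg (fun i _ => (hF01 i (τ ℓ) hτℓ).1)]
      exact Finset.sum_le_sum (fun i hi => hF i hi (τ ℓ) hτℓ)
    have hkey := FDXP.F_sum_bound hα0 hα1 (le_of_lt hζ0) (fun i => F i (τ ℓ))
      (fun i => (hF01 i (τ ℓ) hτℓ).1) H0 ℓ hℓ1 hℓm (hcrit ℓ hℓ)
    have hc1 : 1 ≤ c ℓ := by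
      rw [hcdef]
      have h1 : 1 ≤ FDX.kfun α ℓ := FDXP.kfun_pos α ℓ
      have h2 : 1 ≤ FDX.mfun α m ℓ := by unfold FDX.mfun; omega
      calc 1 = 1 * 1 := (one_mul 1).symm
        _ ≤ FDX.kfun α ℓ * max H0.card (FDX.mfun α m ℓ) :=
          Nat.mul_le_mul h1 (le_trans h2 (le_max_right _ _))
    have hchain : ((c ℓ : ℕ) : ENNReal) * P (X ⁻¹' (SB ℓ))
        ≤ ((c ℓ : ℕ) : ENNReal) * ENNReal.ofReal ζ := by
      calc ((c ℓ : ℕ) : ENNReal) * P (X ⁻¹' (SB ℓ))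
          ≤ ((FDX.mfun α m ℓ : ℕ) : ENNReal) * ∑ i ∈ H0, P {ω | p i ω ≤ τ ℓ} := hmark
        _ ≤ ((FDX.mfun α m ℓ : ℕ) : ENNReal) * ENNReal.ofReal (∑ i ∈ H0, F i (τ ℓ)) :=
            mul_le_mul_right hFsum _
        _ = ENNReal.ofReal ((FDX.mfun α m ℓ : ℝ) * ∑ i ∈ H0, F i (τ ℓ)) := by
            rw [ENNReal.ofReal_mul (by positivity), ENNReal.ofReal_natCast]
        _ ≤ ENNReal.ofReal (ζ * ((c ℓ : ℕ) : ℝ)) := ENNReal.ofReal_le_ofReal hkey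
        _ = ((c ℓ : ℕ) : ENNReal) * ENNReal.ofReal ζ := by
            rw [ENNReal.ofReal_mul (le_of_lt hζ0), ENNReal.ofReal_natCast, mul_comm]
    have hPB : P (X ⁻¹' (SB ℓ)) ≤ ENNReal.ofReal ζ := by
      have hne0 : ((c ℓ : ℕ) : ENNReal) ≠ 0 := by
        simp only [ne_eq, Nat.cast_eq_zero]
        omega
      have hnetop : ((c ℓ : ℕ) : ENNReal) ≠ ⊤ := ENNReal.natCast_ne_top _
      exact (ENNReal.mul_le_mul_iff_right hne0 hnetop).1 hchain
    calc P (A ℓ ∩ B ℓ) = P (X ⁻¹' (SB ℓ)) * P (Y ⁻¹' (g ⁻¹' {ℓ})) := by rw [hABeq, hiff]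
      _ ≤ ENNReal.ofReal ζ * P (A ℓ) := by
          apply mul_le_mul' hPB
          rw [hAdef]
  -- sum up
  have hsumA : ∑ ℓ ∈ Finset.Icc 1 m, P (A ℓ) ≤ 1 := by
    have hdisj : (↑(Finset.Icc 1 m) : Set ℕ).PairwiseDisjoint A := by
      intro a _ b _ hab
      simp only [Function.onFun, hAdef]
      rw [Set.disjoint_left]
      intro ω ha hb
      simp only [Set.mem_preimage, Set.mem_singleton_iff] at ha hb
      exact hab (ha ▸ hb ▸ rfl)
    have hAmeas : ∀ ℓ ∈ Finset.Icc 1 m, MeasurableSet (A ℓ) := by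
      intro ℓ _
      exact hY (hg (measurableSet_singleton ℓ))
    rw [← measure_biUnion_finset hdisj hAmeas]
    exact prob_le_one
  calc P {ω | α < FDX.FDP H0 (FDX.sdReject (fun i => p i ω) τ)}
      ≤ P (⋃ ℓ ∈ Finset.Icc 1 m, A ℓ ∩ B ℓ) := measure_mono hincl
    _ ≤ ∑ ℓ ∈ Finset.Icc 1 m, P (A ℓ ∩ B ℓ) := measure_biUnion_finset_le _ _
    _ ≤ ∑ ℓ ∈ Finset.Icc 1 m, ENNReal.ofReal ζ * P (A ℓ) := Finset.sum_le_sum hstep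
    _ = ENNReal.ofReal ζ * ∑ ℓ ∈ Finset.Icc 1 m, P (A ℓ) := by rw [Finset.mul_sum]
    _ ≤ ENNReal.ofReal ζ * 1 := mul_le_mul_right hsumA _
    _ = ENNReal.ofReal ζ := mul_one _
end

section
/- (The heterogeneous Lehmann–Romano procedure rejects at least as much as Lehmann–Romano under super-uniformity.) Let α, ζ ∈ (0,1), A ⊆ [0,1], and F_1,…,F_m : [0,1] → [0,1] be nondecreasing functions with F_i(t) ≤ t for all i and all t ∈ [0,1]. For ℓ ∈ {1,…,m} define ξ^HLR_ℓ(t) = ( Σ_{j=1}^{m(ℓ)} (F(t))_{(j)} ) / (⌊αℓ⌋ + 1), where (F(t))_{(1)} ≥ … ≥ (F(t))_{(m)} are the values F_1(t),…,F_m(t) sorted nonincreasingly, and let τ^LR_ℓ = ζ(⌊αℓ⌋ + 1)/m(ℓ). Assume that for each ℓ the set {t ∈ A : ξ^HLR_ℓ(t) ≤ ζ}, if nonempty, admits a greatest element, and define τ^HLR_ℓ as this greatest element (τ^HLR_ℓ = 0 if the set is empty). Then for any p-values p_1,…,p_m all belonging to A, the step-down rejection set with critical values (τ^LR_ℓ)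 is contained in the step-down rejection set with critical values (τ^HLR_ℓ). -/
open MeasureTheory ProbabilityTheory Finset

/-- Under super-uniformity (`F_i(t) ≤ t`), the step-down rejection set of the
Lehmann–Romano procedure (critical values `τ^LR_ℓ = ζ(⌊αℓ⌋+1)/m(ℓ)`) is contained in that of
the heterogeneous Lehmann–Romano procedure (critical values `τ^HLR_ℓ`, the greatest element of
`{t ∈ A : ξ^HLR_ℓ(t) ≤ ζ}`, or `0` if that set is empty), for p-values lying in `A`. -/
theorem stmt_3
    {m : ℕ} {α ζ : ℝ} (hα : α ∈ Set.Ioo (0 : ℝ) 1) (hζ : ζ ∈ Set.Ioo (0 : ℝ) 1)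
    (A : Set ℝ) (hA : A ⊆ Set.Icc 0 1)
    (F : Fin m → ℝ → ℝ)
    (hFmono : ∀ i, MonotoneOn (F i) (Set.Icc (0 : ℝ) 1))
    (hF01 : ∀ i, ∀ t ∈ Set.Icc (0 : ℝ) 1, F i t ∈ Set.Icc (0 : ℝ) 1)
    (hFsup : ∀ i, ∀ t ∈ Set.Icc (0 : ℝ) 1, F i t ≤ t)
    (ξHLR : ℕ → ℝ → ℝ)
    (hξHLR : ∀ ℓ t, ξHLR ℓ t =
      (∑ j ∈ Finset.univ.filter (fun j : Fin m => (j : ℕ) < FDX.mfun α m ℓ),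
          FDX.descSort (fun i => F i t) j) / (FDX.kfun α ℓ : ℝ))
    (τHLR : ℕ → ℝ)
    (hτHLR : ∀ ℓ ∈ Finset.Icc 1 m,
      IsGreatest {t | t ∈ A ∧ ξHLR ℓ t ≤ ζ} (τHLR ℓ) ∨
        ({t | t ∈ A ∧ ξHLR ℓ t ≤ ζ} = ∅ ∧ τHLR ℓ = 0))
    (p : Fin m → ℝ) (hp : ∀ i, p i ∈ A) :
    FDX.sdReject p (fun ℓ => ζ * (FDX.kfun α ℓ : ℝ) / (FDX.mfun α m ℓ : ℝ)) ⊆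
      FDX.sdReject p τHLR := by
  classical
  obtain ⟨hα0, hα1⟩ := hα
  obtain ⟨hζ0, hζ1⟩ := hζ
  set τLR : ℕ → ℝ := fun ℓ => ζ * (FDX.kfun α ℓ : ℝ) / (FDX.mfun α m ℓ : ℝ) with hτLRdef
  have hkpos : ∀ ℓ, 0 < FDX.kfun α ℓ := fun ℓ => Nat.succ_pos _
  have hmpos : ∀ ℓ, 0 < FDX.mfun α m ℓ := fun ℓ => Nat.succ_pos _
  have hkposR : ∀ ℓ, (0:ℝ) < (FDX.kfun α ℓ : ℝ) := fun ℓ => by exact_mod_cast hkpos ℓ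
  have hmposR : ∀ ℓ, (0:ℝ) < (FDX.mfun α m ℓ : ℝ) := fun ℓ => by exact_mod_cast hmpos ℓ
  have hτLRpos : ∀ ℓ, 0 ≤ τLR ℓ := by
    intro ℓ
    have := hkposR ℓ; have := hmposR ℓ
    simp only [hτLRdef]; positivity
  have hdesc : ∀ (v : Fin m → ℝ) (j : Fin m), ∃ i, FDX.descSort v j = v i :=
    fun v j => ⟨_, rfl⟩
  -- key step : p i ≤ τLR ℓ → p i ≤ τHLR ℓ
  have key : ∀ ℓ ∈ Finset.Icc 1 m, ∀ i, p i ≤ τLR ℓ → p i ≤ τHLR ℓ := by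
    intro ℓ hℓ i hi
    have hpiA : p i ∈ A := hp i
    have hpi01 : p i ∈ Set.Icc (0:ℝ) 1 := hA hpiA
    have hmem : p i ∈ {t | t ∈ A ∧ ξHLR ℓ t ≤ ζ} := by
      refine ⟨hpiA, ?_⟩
      rw [hξHLR, div_le_iff₀ (hkposR ℓ)]
      have hcard : (Finset.univ.filter (fun j : Fin m => (j : ℕ) < FDX.mfun α m ℓ)).card
          ≤ FDX.mfun α m ℓ := by
        have h1 : (Finset.univ.filter (fun j : Fin m => (j : ℕ) < FDX.mfun α m ℓ)).card
            ≤ (Finset.range (FDX.mfun α m ℓ)).card := by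
          refine Finset.card_le_card_of_injOn (fun j => (j : ℕ)) ?_ (Fin.val_injective.injOn)
          intro a ha
          simp only [Finset.mem_coe, Finset.mem_filter] at ha
          simpa using ha.2
        simpa using h1
      have hterm : ∀ j ∈ Finset.univ.filter (fun j : Fin m => (j : ℕ) < FDX.mfun α m ℓ),
          FDX.descSort (fun i' => F i' (p i)) j ≤ τLR ℓ := by
        intro j _
        obtain ⟨i', hi'⟩ := hdesc (fun i' => F i' (p i)) j
        rw [hi']
        exact le_trans (hFsup i' _ hpi01) hi
      calc ∑ j ∈ Finset.univ.filter (fun j : Fin m => (j : ℕ) < FDX.mfun α m ℓ),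
            FDX.descSort (fun i' => F i' (p i)) j
          ≤ (Finset.univ.filter (fun j : Fin m => (j : ℕ) < FDX.mfun α m ℓ)).card • τLR ℓ :=
            Finset.sum_le_card_nsmul _ _ _ hterm
        _ = ((Finset.univ.filter (fun j : Fin m => (j : ℕ) < FDX.mfun α m ℓ)).card : ℝ) * τLR ℓ := by
            rw [nsmul_eq_mul]
        _ ≤ (FDX.mfun α m ℓ : ℝ) * τLR ℓ := by
            apply mul_le_mul_of_nonneg_right _ (hτLRpos ℓ)
            exact_mod_cast hcard
        _ = ζ * (FDX.kfun α ℓ : ℝ) := by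
            simp only [hτLRdef]
            field_simp
            exact mul_div_cancel_left₀ _ (ne_of_gt (hmposR ℓ))
    rcases hτHLR ℓ hℓ with hg | ⟨hemp, _⟩
    · exact hg.2 hmem
    · rw [hemp] at hmem; exact absurd hmem (Set.notMem_empty _)
  -- τHLR is nonnegative
  have hτnonneg : ∀ ℓ ∈ Finset.Icc 1 m, 0 ≤ τHLR ℓ := by
    intro ℓ hℓ
    rcases hτHLR ℓ hℓ with hg | ⟨_, h0⟩
    · exact (hA hg.1.1).1
    · rw [h0]
  -- ξHLR is pointwise nonincreasing in ℓ, hence τHLR is nondecreasing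
  have hξmono : ∀ ℓ, 1 ≤ ℓ → ℓ + 1 ≤ m → ∀ t ∈ Set.Icc (0:ℝ) 1, ξHLR (ℓ+1) t ≤ ξHLR ℓ t := by
    intro ℓ hℓ1 hℓm t ht
    have hcast : (((ℓ+1 : ℕ)) : ℝ) = (ℓ : ℝ) + 1 := by push_cast; ring
    have hfl : ⌊α * (((ℓ+1 : ℕ)) : ℝ)⌋₊ ≤ ⌊α * (ℓ : ℝ)⌋₊ + 1 := by
      rw [hcast]
      have h1 : α * ((ℓ : ℝ) + 1) ≤ α * (ℓ : ℝ) + 1 := by nlinarith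
      calc ⌊α * ((ℓ : ℝ) + 1)⌋₊ ≤ ⌊α * (ℓ : ℝ) + 1⌋₊ := Nat.floor_le_floor h1
        _ = ⌊α * (ℓ : ℝ)⌋₊ + 1 := Nat.floor_add_one (by positivity)
    have hfl' : ⌊α * (ℓ : ℝ)⌋₊ ≤ ⌊α * (((ℓ+1 : ℕ)) : ℝ)⌋₊ := by
      rw [hcast]
      apply Nat.floor_le_floor
      nlinarith
    have hn : FDX.mfun α m (ℓ+1) ≤ FDX.mfun α m ℓ := by
      unfold FDX.mfun; omega
    have hk : FDX.kfun α ℓ ≤ FDX.kfun α (ℓ+1) := by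
      unfold FDX.kfun; omega
    rw [hξHLR, hξHLR]
    have hnonneg : ∀ j : Fin m, 0 ≤ FDX.descSort (fun i => F i t) j := by
      intro j
      obtain ⟨i', hi'⟩ := hdesc (fun i => F i t) j
      rw [hi']
      exact (hF01 i' t ht).1
    have hS : ∑ j ∈ Finset.univ.filter (fun j : Fin m => (j : ℕ) < FDX.mfun α m (ℓ+1)),
          FDX.descSort (fun i => F i t) j
        ≤ ∑ j ∈ Finset.univ.filter (fun j : Fin m => (j : ℕ) < FDX.mfun α m ℓ),
          FDX.descSort (fun i => F i t) j := by
      apply Finset.sum_le_sum_of_subset_of_nonneg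
      · intro j hj
        simp only [Finset.mem_filter, Finset.mem_univ, true_and] at hj ⊢
        exact lt_of_lt_of_le hj hn
      · intro j _ _; exact hnonneg j
    have hS0 : 0 ≤ ∑ j ∈ Finset.univ.filter (fun j : Fin m => (j : ℕ) < FDX.mfun α m ℓ),
          FDX.descSort (fun i => F i t) j :=
      Finset.sum_nonneg fun j _ => hnonneg j
    exact div_le_div₀ hS0 hS (hkposR ℓ) (by exact_mod_cast hk)
  have hτstep : ∀ ℓ, 1 ≤ ℓ → ℓ + 1 ≤ m → τHLR ℓ ≤ τHLR (ℓ+1) := by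
    intro ℓ hℓ1 hℓm
    have hℓmem : ℓ ∈ Finset.Icc 1 m := Finset.mem_Icc.2 ⟨hℓ1, by omega⟩
    have hℓ1mem : ℓ+1 ∈ Finset.Icc 1 m := Finset.mem_Icc.2 ⟨by omega, hℓm⟩
    rcases hτHLR ℓ hℓmem with hg | ⟨_, h0⟩
    · have hmem : τHLR ℓ ∈ {t | t ∈ A ∧ ξHLR (ℓ+1) t ≤ ζ} :=
        ⟨hg.1.1, le_trans (hξmono ℓ hℓ1 hℓm _ (hA hg.1.1)) hg.1.2⟩
      rcases hτHLR (ℓ+1) hℓ1mem with hg' | ⟨hemp', _⟩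
      · exact hg'.2 hmem
      · rw [hemp'] at hmem; exact absurd hmem (Set.notMem_empty _)
    · rw [h0]; exact hτnonneg (ℓ+1) hℓ1mem
  have hτmono : ∀ a b, 1 ≤ a → a ≤ b → b ≤ m → τHLR a ≤ τHLR b := by
    intro a b ha hab
    induction b, hab using Nat.le_induction with
    | base => intro _; rfl
    | succ n hn ih =>
      intro hnm
      exact le_trans (ih (by omega)) (hτstep n (by omega) hnm)
  -- step-down comparison
  set P1 : ℕ → Prop := fun ℓ => ∀ ℓ', 1 ≤ ℓ' → ℓ' ≤ ℓ → ℓ' ≤ FDX.countLe p (τLR ℓ') with hP1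
  set P2 : ℕ → Prop := fun ℓ => ∀ ℓ', 1 ≤ ℓ' → ℓ' ≤ ℓ → ℓ' ≤ FDX.countLe p (τHLR ℓ') with hP2
  have hL1 : FDX.sdIndex p τLR = @Nat.findGreatest P1 (Classical.decPred _) m := rfl
  have hL2 : FDX.sdIndex p τHLR = @Nat.findGreatest P2 (Classical.decPred _) m := rfl
  intro i hi
  simp only [FDX.sdReject] at hi ⊢
  by_cases hz : FDX.sdIndex p τLR = 0
  · rw [if_pos hz] at hi; exact absurd hi (Finset.notMem_empty i)
  rw [if_neg hz] at hi
  simp only [Finset.mem_filter, Finset.mem_univ, true_and] at hi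
  have hLm : FDX.sdIndex p τLR ≤ m := by
    rw [hL1]; exact @Nat.findGreatest_le P1 (Classical.decPred _) m
  have hL1' : 1 ≤ FDX.sdIndex p τLR := Nat.one_le_iff_ne_zero.2 hz
  have hP10 : P1 0 := by intro ℓ' h1 h0; omega
  have hPL : P1 (FDX.sdIndex p τLR) := by
    rw [hL1]
    exact @Nat.findGreatest_spec 0 P1 (Classical.decPred _) m (Nat.zero_le m) hP10
  have hcount : ∀ ℓ ∈ Finset.Icc 1 m, FDX.countLe p (τLR ℓ) ≤ FDX.countLe p (τHLR ℓ) := by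
    intro ℓ hℓ
    unfold FDX.countLe
    apply Finset.card_le_card
    intro j hj
    simp only [Finset.mem_filter, Finset.mem_univ, true_and] at hj ⊢
    exact key ℓ hℓ j hj
  have hPL2 : P2 (FDX.sdIndex p τLR) := by
    intro ℓ' h1 hℓ'
    exact le_trans (hPL ℓ' h1 hℓ') (hcount ℓ' (Finset.mem_Icc.2 ⟨h1, le_trans hℓ' hLm⟩))
  have hLle : FDX.sdIndex p τLR ≤ FDX.sdIndex p τHLR := by
    rw [hL2]
    exact @Nat.le_findGreatest _ P2 (Classical.decPred _) m hLm hPL2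
  have hL2m : FDX.sdIndex p τHLR ≤ m := by
    rw [hL2]; exact @Nat.findGreatest_le P2 (Classical.decPred _) m
  have hL2nz : FDX.sdIndex p τHLR ≠ 0 := by omega
  rw [if_neg hL2nz]
  simp only [Finset.mem_filter, Finset.mem_univ, true_and]
  calc p i ≤ τHLR (FDX.sdIndex p τLR) :=
        key _ (Finset.mem_Icc.2 ⟨hL1', hLm⟩) i hi
    _ ≤ τHLR (FDX.sdIndex p τHLR) := hτmono _ _ hL1' hLle hL2m
end

section
/- (FDX control of the Poisson-binomial procedure.) Let (Ω, 𝒜, P) be a probability space, p_1,…,p_m : Ω → [0,1] measurable random variables, H0 ⊆ {1,…,m} and H1 = {1,…,m} ∖ H0, α, ζ ∈ (0,1). Assume the random variables (p_i)_{i∈H0} are mutually independent and that the vector (p_i)_{i∈H0} is independent of the vector (p_i)_{i∈H1}, and that there are functions F_1,…,F_m : [0,1] → [0,1] with P(p_i ≤ t) ≤ F_i(t) for every i ∈ H0 and every t ∈ [0,1]. Let 0 ≤ τ_1 ≤ … ≤ τ_m ≤ 1 be critical values such that for every ℓ ∈ {1,…,m}, P( PBin[ ((F(τ_ℓ))_{(j)})_{1≤j≤m(ℓ)}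 ] ≥ ⌊αℓ⌋ + 1 ) ≤ ζ, where (F(τ_ℓ))_{(1)} ≥ … ≥ (F(τ_ℓ))_{(m)} are the values F_1(τ_ℓ),…,F_m(τ_ℓ) sorted nonincreasingly. Then the step-down rejection set R with critical values (τ_ℓ) satisfies P(FDP(R) > α) ≤ ζ. -/
open MeasureTheory ProbabilityTheory Finset

namespace FDX

set_option linter.unusedSectionVars false

section AuxLemmas
variable {ι κ : Type*} [DecidableEq ι] [DecidableEq κ]


theorem pbinTail_zero (s : Finset ι) (π : ι → ℝ) : pbinTail s π 0 = 1 := by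
  unfold pbinTail
  rw [Finset.filter_true_of_mem (fun S _ => Nat.zero_le _)]
  rw [← Finset.prod_add]
  simp

theorem pbinTail_empty (π : ι → ℝ) (k : ℕ) (hk : 1 ≤ k) : pbinTail (∅ : Finset ι) π k = 0 := by
  unfold pbinTail
  rw [Finset.powerset_empty]
  rw [Finset.filter_singleton, if_neg (by simp; omega)]
  simp

theorem pbinTail_insert (s : Finset ι) (a : ι) (ha : a ∉ s) (π : ι → ℝ) (k : ℕ) :
    pbinTail (insert a s) π (k + 1)
      = π a * pbinTail s π k + (1 - π a) * pbinTail s π (k + 1) := by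
  unfold pbinTail
  rw [Finset.sum_filter, Finset.sum_filter, Finset.sum_filter]
  rw [Finset.sum_powerset_insert ha]
  have h1 : ∀ t ∈ s.powerset,
      (if k + 1 ≤ t.card then (∏ i ∈ t, π i) * ∏ i ∈ (insert a s) \ t, (1 - π i) else 0)
        = (1 - π a) * (if k + 1 ≤ t.card then (∏ i ∈ t, π i) * ∏ i ∈ s \ t, (1 - π i) else 0) := by
    intro t ht
    rw [Finset.mem_powerset] at ht
    have hat : a ∉ t := fun h => ha (ht h)
    have : (insert a s) \ t = insert a (s \ t) := by
      rw [Finset.insert_sdiff_of_notMem _ hat]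
    rw [this, Finset.prod_insert (fun h => ha (Finset.mem_sdiff.mp h).1)]
    split <;> ring
  have h2 : ∀ t ∈ s.powerset,
      (if k + 1 ≤ (insert a t).card then (∏ i ∈ insert a t, π i) * ∏ i ∈ (insert a s) \ (insert a t), (1 - π i) else 0)
        = π a * (if k ≤ t.card then (∏ i ∈ t, π i) * ∏ i ∈ s \ t, (1 - π i) else 0) := by
    intro t ht
    rw [Finset.mem_powerset] at ht
    have hat : a ∉ t := fun h => ha (ht h)
    have hcard : (insert a t).card = t.card + 1 := Finset.card_insert_of_notMem hat
    have hsd : (insert a s) \ (insert a t) = s \ t := by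
      ext i
      simp only [Finset.mem_sdiff, Finset.mem_insert]
      constructor
      · rintro ⟨hx1 | hx1, hx2⟩
        · exact absurd hx1 (by rintro rfl; exact hx2 (Or.inl rfl))
        · exact ⟨hx1, fun h => hx2 (Or.inr h)⟩
      · rintro ⟨hx1, hx2⟩
        exact ⟨Or.inr hx1, by rintro (rfl | h); exact ha hx1; exact hx2 h⟩
    rw [hsd, Finset.prod_insert hat, hcard]
    have : k + 1 ≤ t.card + 1 ↔ k ≤ t.card := by omega
    rw [if_congr this rfl rfl]
    split <;> ring
  rw [Finset.sum_congr rfl h1, Finset.sum_congr rfl h2, ← Finset.mul_sum, ← Finset.mul_sum]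
  ring

theorem pbinTail_nonneg (s : Finset ι) (π : ι → ℝ) (k : ℕ)
    (h0 : ∀ i ∈ s, 0 ≤ π i) (h1 : ∀ i ∈ s, π i ≤ 1) : 0 ≤ pbinTail s π k := by
  apply Finset.sum_nonneg
  intro S hS
  rw [Finset.mem_filter, Finset.mem_powerset] at hS
  apply mul_nonneg
  · exact Finset.prod_nonneg (fun i hi => h0 i (hS.1 hi))
  · exact Finset.prod_nonneg (fun i hi => by
      have := h1 i (Finset.mem_sdiff.mp hi).1; linarith)

theorem pbinTail_succ_le (s : Finset ι) (π : ι → ℝ) (k : ℕ)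
    (h0 : ∀ i ∈ s, 0 ≤ π i) (h1 : ∀ i ∈ s, π i ≤ 1) :
    pbinTail s π (k + 1) ≤ pbinTail s π k := by
  apply Finset.sum_le_sum_of_subset_of_nonneg
  · intro S hS
    rw [Finset.mem_filter] at hS ⊢
    exact ⟨hS.1, by omega⟩
  · intro S hS _
    rw [Finset.mem_filter, Finset.mem_powerset] at hS
    apply mul_nonneg
    · exact Finset.prod_nonneg (fun i hi => h0 i (hS.1 hi))
    · exact Finset.prod_nonneg (fun i hi => by
        have := h1 i (Finset.mem_sdiff.mp hi).1; linarith)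

theorem pbinTail_anti (s : Finset ι) (π : ι → ℝ) {k k' : ℕ} (hkk : k ≤ k')
    (h0 : ∀ i ∈ s, 0 ≤ π i) (h1 : ∀ i ∈ s, π i ≤ 1) :
    pbinTail s π k' ≤ pbinTail s π k := by
  induction k' with
  | zero => have : k = 0 := by omega
            simp [this]
  | succ n ih =>
    rcases Nat.lt_or_ge k (n+1) with h | h
    · exact le_trans (pbinTail_succ_le s π n h0 h1) (ih (by omega))
    · have : k = n + 1 := by omega
      simp [this]

theorem pbinTail_le_one (s : Finset ι) (π : ι → ℝ) (k : ℕ)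
    (h0 : ∀ i ∈ s, 0 ≤ π i) (h1 : ∀ i ∈ s, π i ≤ 1) : pbinTail s π k ≤ 1 := by
  have := pbinTail_anti s π (Nat.zero_le k) h0 h1
  rwa [pbinTail_zero] at this

theorem le_pbinTail_insert (s : Finset ι) (a : ι) (ha : a ∉ s) (π : ι → ℝ) (k : ℕ)
    (h0 : ∀ i ∈ insert a s, 0 ≤ π i) (h1 : ∀ i ∈ insert a s, π i ≤ 1) :
    pbinTail s π k ≤ pbinTail (insert a s) π k := by
  have h0' : ∀ i ∈ s, 0 ≤ π i := fun i hi => h0 i (Finset.mem_insert_of_mem hi)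
  have h1' : ∀ i ∈ s, π i ≤ 1 := fun i hi => h1 i (Finset.mem_insert_of_mem hi)
  have ha0 : 0 ≤ π a := h0 a (Finset.mem_insert_self a s)
  have ha1 : π a ≤ 1 := h1 a (Finset.mem_insert_self a s)
  cases k with
  | zero => rw [pbinTail_zero, pbinTail_zero]
  | succ n =>
    rw [pbinTail_insert s a ha π n]
    have hmono := pbinTail_succ_le s π n h0' h1'
    nlinarith

theorem pbinTail_le_superset {s u : Finset ι} (hsu : s ⊆ u) (π : ι → ℝ) (k : ℕ)
    (h0 : ∀ i ∈ u, 0 ≤ π i) (h1 : ∀ i ∈ u, π i ≤ 1) :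
    pbinTail s π k ≤ pbinTail u π k := by
  classical
  induction u using Finset.strongInduction with
  | _ u ih =>
    rcases eq_or_ne s u with rfl | hne
    · exact le_refl _
    · have hss : s ⊂ u := Finset.ssubset_iff_subset_ne.mpr ⟨hsu, hne⟩
      obtain ⟨a, hau, has⟩ := Finset.exists_of_ssubset hss
      have herase : s ⊆ u.erase a := fun i hi =>
        Finset.mem_erase.mpr ⟨fun h => has (h ▸ hi), hsu hi⟩
      have hlt : u.erase a ⊂ u := Finset.erase_ssubset hau
      have h0' : ∀ i ∈ u.erase a, 0 ≤ π i := fun i hi => h0 i (Finset.mem_of_mem_erase hi)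
      have h1' : ∀ i ∈ u.erase a, π i ≤ 1 := fun i hi => h1 i (Finset.mem_of_mem_erase hi)
      have step1 := ih (u.erase a) hlt herase h0' h1'
      have step2 : pbinTail (u.erase a) π k ≤ pbinTail (insert a (u.erase a)) π k := by
        apply le_pbinTail_insert _ _ (Finset.notMem_erase a u) π k
        · intro i hi; rw [Finset.insert_erase hau] at hi; exact h0 i hi
        · intro i hi; rw [Finset.insert_erase hau] at hi; exact h1 i hi
      rw [Finset.insert_erase hau] at step2
      exact le_trans step1 step2

theorem pbinTail_le_image (φ : ι → κ) (s : Finset ι) (π : ι → ℝ) (π' : κ → ℝ) (k : ℕ)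
    (hinj : Set.InjOn φ s)
    (h0 : ∀ i ∈ s, 0 ≤ π i) (h1 : ∀ i ∈ s, π i ≤ π' (φ i)) (h2 : ∀ i ∈ s, π' (φ i) ≤ 1) :
    pbinTail s π k ≤ pbinTail (s.image φ) π' k := by
  classical
  induction s using Finset.induction generalizing k with
  | empty =>
    simp only [Finset.image_empty]
    cases k with
    | zero => rw [pbinTail_zero, pbinTail_zero]
    | succ n => rw [pbinTail_empty _ _ (by omega), pbinTail_empty _ _ (by omega)]
  | insert _ _ ha =>
    rename_i a s ih
    have hmem : ∀ i ∈ s, i ∈ insert a s := fun i hi => Finset.mem_insert_of_mem hi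
    have hinj' : Set.InjOn φ s := fun x hx y hy h =>
      hinj (Finset.mem_coe.mpr (hmem x hx)) (Finset.mem_coe.mpr (hmem y hy)) h
    have h0' : ∀ i ∈ s, 0 ≤ π i := fun i hi => h0 i (hmem i hi)
    have h1' : ∀ i ∈ s, π i ≤ π' (φ i) := fun i hi => h1 i (hmem i hi)
    have h2' : ∀ i ∈ s, π' (φ i) ≤ 1 := fun i hi => h2 i (hmem i hi)
    have ihk := fun k => ih (k := k) hinj' h0' h1' h2'
    have haimg : φ a ∉ s.image φ := by
      intro h
      obtain ⟨b, hb, hba⟩ := Finset.mem_image.mp h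
      have : b = a := hinj (Finset.mem_coe.mpr (hmem b hb)) (Finset.mem_coe.mpr (Finset.mem_insert_self a s)) hba
      exact ha (this ▸ hb)
    rw [Finset.image_insert]
    have himg0 : ∀ j ∈ s.image φ, 0 ≤ π' j := by
      intro j hj
      obtain ⟨b, hb, rfl⟩ := Finset.mem_image.mp hj
      exact le_trans (h0' b hb) (h1' b hb)
    have himg1 : ∀ j ∈ s.image φ, π' j ≤ 1 := by
      intro j hj
      obtain ⟨b, hb, rfl⟩ := Finset.mem_image.mp hj
      exact h2' b hb
    cases k with
    | zero => rw [pbinTail_zero, pbinTail_zero]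
    | succ n =>
      rw [pbinTail_insert s a ha π n, pbinTail_insert (s.image φ) (φ a) haimg π' n]
      have e1 := ihk n
      have e2 := ihk (n+1)
      have e3 : pbinTail (s.image φ) π' (n+1) ≤ pbinTail (s.image φ) π' n :=
        pbinTail_succ_le _ _ _ himg0 himg1
      have ha0 : 0 ≤ π a := h0 a (Finset.mem_insert_self a s)
      have ha1 : π a ≤ π' (φ a) := h1 a (Finset.mem_insert_self a s)
      have ha2 : π' (φ a) ≤ 1 := h2 a (Finset.mem_insert_self a s)
      nlinarith

theorem descSort_anti {m : ℕ} (v : Fin m → ℝ) : Antitone (descSort v) := by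
  intro j j' hjj
  have := Tuple.monotone_sort (fun i => -v i) hjj
  simp only [Function.comp_apply] at this
  unfold descSort
  linarith

theorem strictMono_fin_le {c : ℕ} (f : Fin c → ℕ) (hf : StrictMono f) :
    ∀ r : Fin c, (r : ℕ) ≤ f r := by
  have key : ∀ rv (hr : rv < c), rv ≤ f ⟨rv, hr⟩ := by
    intro rv
    induction rv with
    | zero => intro _; exact Nat.zero_le _
    | succ t iht =>
      intro hr
      have h1 : (⟨t, by omega⟩ : Fin c) < ⟨t+1, hr⟩ := by
        simp [Fin.lt_def]
      have h2 := hf h1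
      have h3 := iht (by omega)
      omega
  intro r
  have := key r.1 r.2
  simpa using this

theorem exists_desc_inj {m : ℕ} (v : Fin m → ℝ) (H : Finset (Fin m)) (n : ℕ) (hn : H.card ≤ n) :
    ∃ φ : Fin m → Fin m, Set.InjOn φ H ∧ (∀ i ∈ H, (φ i : ℕ) < n) ∧
      (∀ i ∈ H, v i ≤ descSort v (φ i)) := by
  classical
  set σ := Tuple.sort (fun i => -v i) with hσ
  set A : Finset (Fin m) := H.image (fun i => σ.symm i) with hA
  set c := H.card with hc
  have hcard : A.card = c := Finset.card_image_of_injective _ (Equiv.injective _)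
  have hcm : c ≤ m := by
    calc c = H.card := rfl
    _ ≤ (Finset.univ : Finset (Fin m)).card := Finset.card_le_univ H
    _ = m := by simp
  set e := A.orderIsoOfFin hcard with he
  have hmono : StrictMono (fun r : Fin c => ((e r : Fin m) : ℕ)) := by
    intro r r' h
    have h2 : e r < e r' := e.strictMono h
    exact h2
  have hle := strictMono_fin_le _ hmono
  have hqmem : ∀ i ∈ H, σ.symm i ∈ A := by
    intro i hi
    exact Finset.mem_image_of_mem _ hi
  refine ⟨fun i => if h : i ∈ H then
      ⟨(e.symm ⟨σ.symm i, hqmem i h⟩ : Fin c).1, lt_of_lt_of_le (Fin.is_lt _) hcm⟩ else i,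
    ?_, ?_, ?_⟩
  · intro i hi i' hi' heq
    rw [Finset.mem_coe] at hi hi'
    simp only [dif_pos hi, dif_pos hi'] at heq
    have h3 : (e.symm ⟨σ.symm i, hqmem i hi⟩ : Fin c) = e.symm ⟨σ.symm i', hqmem i' hi'⟩ := by
      apply Fin.ext
      have := congrArg Fin.val heq
      simpa using this
    have h4 := e.symm.injective h3
    have h5 : σ.symm i = σ.symm i' := congrArg Subtype.val h4
    exact σ.symm.injective h5
  · intro i hi
    simp only [dif_pos hi]
    exact lt_of_lt_of_le (Fin.is_lt _) hn
  · intro i hi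
    simp only [dif_pos hi]
    set r := e.symm ⟨σ.symm i, hqmem i hi⟩ with hr
    have h6 : ((e r : Fin m) : ℕ) = ((σ.symm i : Fin m) : ℕ) := by
      rw [hr, OrderIso.apply_symm_apply]
    have h7 : (r : ℕ) ≤ ((σ.symm i : Fin m) : ℕ) := h6 ▸ hle r
    have h8 : (⟨(r : ℕ), lt_of_lt_of_le (Fin.is_lt _) hcm⟩ : Fin m) ≤ σ.symm i := by
      rw [Fin.le_def]
      exact h7
    have h9 := descSort_anti v h8
    have h10 : descSort v (σ.symm i) = v i := by
      unfold descSort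
      rw [← hσ, Equiv.apply_symm_apply]
    linarith

section Prob
open MeasureTheory ProbabilityTheory

variable {Ω : Type*} [MeasurableSpace Ω] {P : Measure Ω} [IsProbabilityMeasure P]
variable {ι0 : Type*} [DecidableEq ι0]

theorem card_filter_subtype_s5 (s : Finset ι0) (q : ι0 → Prop) [DecidablePred q] :
    ((Finset.univ : Finset {x // x ∈ s}).filter (fun i => q i.1)).card
      = (s.filter q).card := by
  classical
  rw [Finset.univ_eq_attach, Finset.filter_attach, Finset.card_map, Finset.card_attach]

theorem measurable_count {ιT : Type*} [Fintype ιT] (t : ℝ) :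
    Measurable (fun x : ιT → ℝ =>
      ((Finset.univ : Finset ιT).filter (fun i => x i ≤ t)).card) := by
  classical
  have : (fun x : ιT → ℝ =>
      ((Finset.univ : Finset ιT).filter (fun i => x i ≤ t)).card)
      = fun x => ∑ i : ιT, if x i ≤ t then 1 else 0 := by
    funext x
    rw [Finset.card_filter]
  rw [this]
  apply Finset.measurable_sum
  intro i _
  apply Measurable.ite _ measurable_const measurable_const
  exact measurableSet_le (measurable_pi_apply i) measurable_const


theorem card_filter_subtype_p {ιT : Type*} [Fintype ιT] (A : ιT → Prop) [DecidablePred A]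
    (q : ιT → Prop) [DecidablePred q] :
    ((Finset.univ : Finset {i // A i}).filter (fun i => q i.1)).card
      = ((Finset.univ.filter A).filter q).card := by
  apply Finset.card_bij (fun (a : {i // A i}) (_ : a ∈ (Finset.univ : Finset {i // A i}).filter (fun i => q i.1)) => a.1)
  · intro a ha
    rw [Finset.mem_filter] at ha ⊢
    exact ⟨Finset.mem_filter.mpr ⟨Finset.mem_univ _, a.2⟩, ha.2⟩
  · intro a _ b _ h
    exact Subtype.ext h
  · intro b hb
    rw [Finset.mem_filter, Finset.mem_filter] at hb
    exact ⟨⟨b, hb.1.2⟩, Finset.mem_filter.mpr ⟨Finset.mem_univ _, hb.2⟩, rfl⟩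

theorem count_tail_le (f : ι0 → Ω → ℝ)
    (hmeas : ∀ i, Measurable (f i))
    (hInd : iIndepFun f P)
    (t : ℝ) (g : ι0 → ℝ) (hg0 : ∀ i, 0 ≤ g i) (hg1 : ∀ i, g i ≤ 1)
    (hq : ∀ i, P {ω | f i ω ≤ t} ≤ ENNReal.ofReal (g i))
    (s : Finset ι0) (k : ℕ) :
    P {ω | k ≤ (s.filter (fun i => f i ω ≤ t)).card} ≤ ENNReal.ofReal (pbinTail s g k) := by
  classical
  induction s using Finset.induction generalizing k with
  | empty =>
    cases k with
    | zero =>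
      rw [pbinTail_zero]
      simp only [Finset.filter_empty, Finset.card_empty, Nat.le_zero, ENNReal.ofReal_one]
      exact prob_le_one
    | succ n =>
      rw [pbinTail_empty _ _ (by omega)]
      simp only [Finset.filter_empty, Finset.card_empty]
      have : {ω : Ω | n + 1 ≤ 0} = ∅ := by
        ext ω; simp
      rw [this]
      simp
  | insert _ _ ha =>
    rename_i a s ih
    have hbd0 : ∀ i ∈ s, 0 ≤ g i := fun i _ => hg0 i
    have hbd1 : ∀ i ∈ s, g i ≤ 1 := fun i _ => hg1 i
    cases k with
    | zero =>
      rw [pbinTail_zero]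
      simp only [ENNReal.ofReal_one]
      exact prob_le_one
    | succ n =>
      -- events
      set Ea : Set Ω := {ω | f a ω ≤ t} with hEa
      set C1 : Set Ω := {ω | n ≤ (s.filter (fun i => f i ω ≤ t)).card} with hC1
      set C2 : Set Ω := {ω | n + 1 ≤ (s.filter (fun i => f i ω ≤ t)).card} with hC2
      have hsplit : {ω | n + 1 ≤ ((insert a s).filter (fun i => f i ω ≤ t)).card}
          ⊆ (Ea ∩ C1) ∪ (Eaᶜ ∩ C2) := by
        intro ω hω
        simp only [Set.mem_setOf_eq] at hω
        by_cases hfa : f a ω ≤ t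
        · left
          constructor
          · exact hfa
          · have : ((insert a s).filter (fun i => f i ω ≤ t))
                = insert a (s.filter (fun i => f i ω ≤ t)) := by
              rw [Finset.filter_insert, if_pos hfa]
            rw [this, Finset.card_insert_of_notMem
              (fun h => ha (Finset.mem_of_mem_filter a h))] at hω
            exact Nat.le_of_succ_le_succ hω
        · right
          constructor
          · exact hfa
          · have : ((insert a s).filter (fun i => f i ω ≤ t))
                = s.filter (fun i => f i ω ≤ t) := by
              rw [Finset.filter_insert, if_neg hfa]
            rwa [this] at hω
      -- independence
      have hdisj : Disjoint ({a} : Finset ι0) s := by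
        simp [Finset.disjoint_singleton_left, ha]
      have hIF := hInd.indepFun_finset {a} s hdisj hmeas
      have hIF' := indepFun_iff_measure_inter_preimage_eq_mul.mp hIF
      set X := fun ω (i : ({a} : Finset ι0)) => f i ω with hX
      set Y := fun ω (i : (s : Finset ι0)) => f i ω with hY
      have hamem : a ∈ ({a} : Finset ι0) := Finset.mem_singleton_self a
      set SA : Set (({a} : Finset ι0) → ℝ) := {x | x ⟨a, hamem⟩ ≤ t} with hSA
      have hSAm : MeasurableSet SA :=
        measurableSet_le (measurable_pi_apply _) measurable_const
      have hEaX : Ea = X ⁻¹' SA := rfl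
      have hEacX : Eaᶜ = X ⁻¹' SAᶜ := by
        rw [hEaX]; rfl
      set B : ℕ → Set ({i // i ∈ s} → ℝ) := fun j =>
        {x | j ≤ ((Finset.univ : Finset {i // i ∈ s}).filter (fun i => x i ≤ t)).card} with hB
      have hBm : ∀ j, MeasurableSet (B j) := by
        intro j
        exact measurable_count t measurableSet_Ici
      have hCY : ∀ j, {ω | j ≤ (s.filter (fun i => f i ω ≤ t)).card} = Y ⁻¹' (B j) := by
        intro j
        ext ω
        simp only [Set.mem_setOf_eq, Set.mem_preimage, hB, hY]
        rw [card_filter_subtype_s5 s (fun i => f i ω ≤ t)]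
      have hprod1 : P (Ea ∩ C1) = P Ea * P C1 := by
        rw [hEaX, hC1, hCY n]
        exact hIF' SA (B n) hSAm (hBm n)
      have hprod2 : P (Eaᶜ ∩ C2) = P Eaᶜ * P C2 := by
        rw [hEacX, hC2, hCY (n+1)]
        exact hIF' SAᶜ (B (n+1)) hSAm.compl (hBm (n+1))
      -- real numbers
      have hEam : MeasurableSet Ea := measurableSet_le (hmeas a) measurable_const
      have hcompl : P Eaᶜ = 1 - P Ea := prob_compl_eq_one_sub hEam
      set x := (P Ea).toReal with hx
      set c1 := (P C1).toReal with hc1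
      set c2 := (P C2).toReal with hc2
      have hx0 : 0 ≤ x := ENNReal.toReal_nonneg
      have hx1 : x ≤ 1 := by
        rw [hx]
        exact ENNReal.toReal_le_of_le_ofReal zero_le_one (by simpa using prob_le_one (μ := P) (s := Ea))
      have hxg : x ≤ g a := by
        rw [hx]
        exact ENNReal.toReal_le_of_le_ofReal (hg0 a) (hq a)
      have hT1 : c1 ≤ pbinTail s g n := by
        rw [hc1]
        exact ENNReal.toReal_le_of_le_ofReal (pbinTail_nonneg s g n hbd0 hbd1) (ih n)
      have hT2 : c2 ≤ pbinTail s g (n+1) := by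
        rw [hc2]
        exact ENNReal.toReal_le_of_le_ofReal (pbinTail_nonneg s g (n+1) hbd0 hbd1) (ih (n+1))
      have hc10 : 0 ≤ c1 := ENNReal.toReal_nonneg
      have hc20 : 0 ≤ c2 := ENNReal.toReal_nonneg
      have hTmono : pbinTail s g (n+1) ≤ pbinTail s g n := pbinTail_succ_le s g n hbd0 hbd1
      have hT2nn : 0 ≤ pbinTail s g (n+1) := pbinTail_nonneg s g (n+1) hbd0 hbd1
      -- combine
      have hPE : P {ω | n + 1 ≤ ((insert a s).filter (fun i => f i ω ≤ t)).card}
          ≤ P (Ea ∩ C1) + P (Eaᶜ ∩ C2) :=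
        le_trans (measure_mono hsplit) (measure_union_le _ _)
      have hfin1 : P (Ea ∩ C1) ≠ ⊤ := measure_ne_top P _
      have hfin2 : P (Eaᶜ ∩ C2) ≠ ⊤ := measure_ne_top P _
      have htr : (P (Ea ∩ C1) + P (Eaᶜ ∩ C2)).toReal = x * c1 + (1 - x) * c2 := by
        rw [ENNReal.toReal_add hfin1 hfin2, hprod1, hprod2, hcompl]
        rw [ENNReal.toReal_mul, ENNReal.toReal_mul]
        congr 1
        congr 1
        rw [ENNReal.toReal_sub_of_le (prob_le_one) (by simp)]
        simp [hx]
      have hgoal : x * c1 + (1 - x) * c2 ≤ pbinTail (insert a s) g (n+1) := by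
        rw [pbinTail_insert s a ha g n]
        nlinarith
      calc P {ω | n + 1 ≤ ((insert a s).filter (fun i => f i ω ≤ t)).card}
          ≤ P (Ea ∩ C1) + P (Eaᶜ ∩ C2) := hPE
        _ = ENNReal.ofReal ((P (Ea ∩ C1) + P (Eaᶜ ∩ C2)).toReal) := by
            rw [ENNReal.ofReal_toReal (by simp [hfin1, hfin2])]
        _ ≤ ENNReal.ofReal (pbinTail (insert a s) g (n+1)) := by
            apply ENNReal.ofReal_le_ofReal
            rw [htr]
            exact hgoal

end Prob

section Det

/-- The oracle index. -/
noncomputable def jfun (m : ℕ) (k : ℕ → ℕ) (s : ℕ → ℕ) : ℕ :=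
  sInf {ℓ | 1 ≤ ℓ ∧ (ℓ = m ∨ s (ℓ + 1) + k ℓ ≤ ℓ)}

theorem jfun_mem (m : ℕ) (hm : 1 ≤ m) (k s : ℕ → ℕ) :
    1 ≤ jfun m k s ∧ jfun m k s ≤ m ∧
      (jfun m k s = m ∨ s (jfun m k s + 1) + k (jfun m k s) ≤ jfun m k s) := by
  have hmem : m ∈ {ℓ | 1 ≤ ℓ ∧ (ℓ = m ∨ s (ℓ + 1) + k ℓ ≤ ℓ)} := ⟨hm, Or.inl rfl⟩
  have h1 := Nat.sInf_mem (Set.nonempty_of_mem hmem)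
  have h2 := Nat.sInf_le hmem
  exact ⟨h1.1, h2, h1.2⟩


theorem jfun_eq_iff (m : ℕ) (hm : 1 ≤ m) (k s : ℕ → ℕ) (j : ℕ) :
    jfun m k s = j ↔ ((1 ≤ j ∧ (j = m ∨ s (j + 1) + k j ≤ j)) ∧
      ∀ ℓ, ℓ < j → ¬(1 ≤ ℓ ∧ (ℓ = m ∨ s (ℓ + 1) + k ℓ ≤ ℓ))) := by
  have hne : Set.Nonempty {ℓ | 1 ≤ ℓ ∧ (ℓ = m ∨ s (ℓ + 1) + k ℓ ≤ ℓ)} := ⟨m, hm, Or.inl rfl⟩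
  constructor
  · rintro rfl
    exact ⟨Nat.sInf_mem hne, fun ℓ hℓ => Nat.notMem_of_lt_sInf hℓ⟩
  · rintro ⟨hj, hmin⟩
    refine le_antisymm (Nat.sInf_le hj) ?_
    by_contra hcon
    push_neg at hcon
    exact hmin _ hcon (Nat.sInf_mem hne)

theorem jfun_valid (m m1 : ℕ) (hm : 1 ≤ m) (k s : ℕ → ℕ)
    (hk1 : ∀ ℓ, 1 ≤ k ℓ)
    (hkmono : ∀ ℓ ℓ', 1 ≤ ℓ → ℓ ≤ ℓ' → k ℓ ≤ k ℓ')
    (hs_le : ∀ ℓ, s ℓ ≤ m1) :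
    jfun m k s ≤ k (jfun m k s) + m1 := by
  set jb := jfun m k s with hjb
  obtain ⟨hjb1, hjbm, _⟩ := jfun_mem m hm k s
  rcases Nat.lt_or_ge jb 2 with h2 | h2
  · have := hk1 jb; omega
  · have hjs : jb = sInf {ℓ | 1 ≤ ℓ ∧ (ℓ = m ∨ s (ℓ + 1) + k ℓ ≤ ℓ)} := by
      rw [hjb, jfun]
    have hlt : jb - 1 < jb := by omega
    have hnot : jb - 1 ∉ {ℓ | 1 ≤ ℓ ∧ (ℓ = m ∨ s (ℓ + 1) + k ℓ ≤ ℓ)} :=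
      Nat.notMem_of_lt_sInf (hjs ▸ hlt)
    simp only [Set.mem_setOf_eq, not_and, not_or] at hnot
    have h3 := hnot (by omega)
    have h4 : ¬ (s (jb - 1 + 1) + k (jb - 1) ≤ jb - 1) := h3.2
    have h5 : jb - 1 + 1 = jb := by omega
    rw [h5] at h4
    have h6 := hkmono (jb - 1) jb (by omega) (by omega)
    have h7 := hs_le jb
    omega

theorem jfun_cross (m L : ℕ) (k V s : ℕ → ℕ)
    (hL1 : 1 ≤ L) (hLm : L ≤ m)
    (hsmono : ∀ ℓ ℓ', 1 ≤ ℓ → ℓ ≤ ℓ' → ℓ' ≤ m → s ℓ ≤ s ℓ')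
    (hVmono : ∀ ℓ ℓ', 1 ≤ ℓ → ℓ ≤ ℓ' → ℓ' ≤ m → V ℓ ≤ V ℓ')
    (hpass : ∀ ℓ', 1 ≤ ℓ' → ℓ' ≤ L → ℓ' ≤ V ℓ' + s ℓ')
    (hfail : L < m → V (L + 1) + s (L + 1) ≤ L)
    (hbad : k L ≤ V L) :
    k (jfun m k s) ≤ V (jfun m k s) := by
  have hm : 1 ≤ m := le_trans hL1 hLm
  set jb := jfun m k s with hjb
  obtain ⟨hjb1, hjbm, hcond⟩ := jfun_mem m hm k s
  have hCondL : L ∈ {ℓ | 1 ≤ ℓ ∧ (ℓ = m ∨ s (ℓ + 1) + k ℓ ≤ ℓ)} := by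
    refine ⟨hL1, ?_⟩
    rcases Nat.lt_or_ge L m with hLlt | hLge
    · right
      have h1 := hfail hLlt
      have h2 := hVmono L (L + 1) hL1 (by omega) (by omega)
      omega
    · left; omega
  have hjbL : jb ≤ L := Nat.sInf_le hCondL
  rcases Nat.eq_or_lt_of_le hjbL with heq | hlt
  · rw [heq]; exact hbad
  · -- jb < L, so jb ≠ m and the budget condition holds
    have hjbnm : jb ≠ m := by omega
    have hbudget : s (jb + 1) + k jb ≤ jb := by
      rcases hcond with h | h
      · exact absurd h hjbnm
      · exact h
    have hpassjb : jb ≤ V jb + s jb := hpass jb hjb1 (by omega)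
    have hsm : s jb ≤ s (jb + 1) := hsmono jb (jb + 1) hjb1 (by omega) (by omega)
    omega

end Det

end AuxLemmas

end FDX

/-- FDX control of the Poisson-binomial procedure. If the null p-values are
mutually independent and independent of the alternative ones, `P(p_i ≤ t) ≤ F_i(t)` for nulls,
and the nondecreasing critical values satisfy
`P(PBin[((F(τ_ℓ))_{(j)})_{j ≤ m(ℓ)}] ≥ ⌊αℓ⌋+1) ≤ ζ` for all `ℓ`, then the step-down procedure
satisfies `P(FDP > α) ≤ ζ`. -/
theorem stmt_5
    {Ω : Type*} [MeasurableSpace Ω] (P : MeasureTheory.Measure Ω) [IsProbabilityMeasure P]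
    {m : ℕ} (p : Fin m → Ω → ℝ)
    (hmeas : ∀ i, Measurable (p i))
    (hp01 : ∀ i ω, p i ω ∈ Set.Icc (0 : ℝ) 1)
    (H0 : Finset (Fin m))
    {α ζ : ℝ} (hα : α ∈ Set.Ioo (0 : ℝ) 1) (hζ : ζ ∈ Set.Ioo (0 : ℝ) 1)
    (hIndep0 : iIndepFun
      (fun (i : {i : Fin m // i ∈ H0}) => fun ω => p i.1 ω) P)
    (hIndep01 : IndepFun (fun ω => fun i : {i : Fin m // i ∈ H0} => p i.1 ω)
      (fun ω => fun i : {i : Fin m // i ∉ H0} => p i.1 ω) P)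
    (F : Fin m → ℝ → ℝ)
    (hF01 : ∀ i, ∀ t ∈ Set.Icc (0 : ℝ) 1, F i t ∈ Set.Icc (0 : ℝ) 1)
    (hF : ∀ i ∈ H0, ∀ t ∈ Set.Icc (0 : ℝ) 1, P {ω | p i ω ≤ t} ≤ ENNReal.ofReal (F i t))
    (τ : ℕ → ℝ)
    (hτ01 : ∀ ℓ ∈ Finset.Icc 1 m, τ ℓ ∈ Set.Icc (0 : ℝ) 1)
    (hτmono : ∀ ℓ ℓ', 1 ≤ ℓ → ℓ ≤ ℓ' → ℓ' ≤ m → τ ℓ ≤ τ ℓ')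
    (hcrit : ∀ ℓ ∈ Finset.Icc 1 m,
      FDX.pbinTail (Finset.univ.filter (fun j : Fin m => (j : ℕ) < FDX.mfun α m ℓ))
        (FDX.descSort (fun i => F i (τ ℓ))) (FDX.kfun α ℓ) ≤ ζ) :
    P {ω | α < FDX.FDP H0 (FDX.sdReject (fun i => p i ω) τ)} ≤ ENNReal.ofReal ζ := by
  classical
  rcases Nat.eq_zero_or_pos m with hm0 | hm
  · -- trivial case m = 0
    have hempty : {ω | α < FDX.FDP H0 (FDX.sdReject (fun i => p i ω) τ)} = ∅ := by
      ext ω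
      simp only [Set.mem_setOf_eq, Set.mem_empty_iff_false, iff_false, not_lt]
      have hsd0 : FDX.sdIndex (fun i => p i ω) τ = 0 := by
        have h := @Nat.findGreatest_le
          (fun ℓ => ∀ ℓ', 1 ≤ ℓ' → ℓ' ≤ ℓ → ℓ' ≤ FDX.countLe (fun i => p i ω) (τ ℓ'))
          (Classical.decPred _) m
        rw [FDX.sdIndex]
        omega
      rw [FDX.sdReject, if_pos hsd0, FDX.FDP]
      simp only [Finset.empty_inter, Finset.card_empty, Nat.cast_zero, zero_div]
      exact le_of_lt hα.1
    rw [hempty]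
    simp
  -- main case
  have hα0 : (0:ℝ) < α := hα.1
  have hk1 : ∀ ℓ, 1 ≤ FDX.kfun α ℓ := fun ℓ => Nat.le_add_left 1 _
  have hkmono : ∀ ℓ ℓ', 1 ≤ ℓ → ℓ ≤ ℓ' → FDX.kfun α ℓ ≤ FDX.kfun α ℓ' := by
    intro ℓ ℓ' _ hle
    have hmul : α * (ℓ:ℝ) ≤ α * (ℓ':ℝ) := by
      apply mul_le_mul_of_nonneg_left _ hα0.le
      exact_mod_cast hle
    exact Nat.succ_le_succ (Nat.floor_mono hmul)
  set m1 := (H0ᶜ : Finset (Fin m)).card with hm1def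
  have hcompl_eq : (Finset.univ.filter (fun i : Fin m => ¬ i ∈ H0)) = H0ᶜ := by
    ext i; simp
  have hm0m1 : H0.card + m1 = m := by
    rw [hm1def, Finset.card_add_card_compl, Fintype.card_fin]
  set scnt : ({i : Fin m // ¬ i ∈ H0} → ℝ) → ℕ → ℕ :=
    fun x ℓ => ((Finset.univ : Finset {i : Fin m // ¬ i ∈ H0}).filter
      (fun i => x i ≤ τ ℓ)).card with hscnt
  set jfn : ({i : Fin m // ¬ i ∈ H0} → ℝ) → ℕ :=
    fun x => FDX.jfun m (FDX.kfun α) (scnt x) with hjfn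
  set Aset : ℕ → Set Ω :=
    fun j => (fun ω => fun i : {i : Fin m // ¬ i ∈ H0} => p i.1 ω) ⁻¹' {x | jfn x = j} with hAset
  set Bset : ℕ → Set Ω :=
    fun j => {ω | FDX.kfun α j ≤ (H0.filter (fun i => p i ω ≤ τ j)).card} with hBset
  have hscnt_le : ∀ x ℓ, scnt x ℓ ≤ m1 := by
    intro x ℓ
    calc scnt x ℓ ≤ (Finset.univ : Finset {i : Fin m // ¬ i ∈ H0}).card :=
          Finset.card_filter_le _ _
    _ = m1 := by
        rw [Finset.card_univ, Fintype.card_subtype, hcompl_eq]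
  have hcount_split : ∀ (q : Fin m → ℝ) (t : ℝ),
      FDX.countLe q t = (H0.filter (fun i => q i ≤ t)).card
        + (H0ᶜ.filter (fun i => q i ≤ t)).card := by
    intro q t
    rw [FDX.countLe, ← Finset.card_union_of_disjoint
      (Finset.disjoint_filter_filter disjoint_compl_right), ← Finset.filter_union,
      Finset.union_compl]
  have hsf_eq : ∀ (ω : Ω) (ℓ : ℕ),
      scnt (fun i : {i : Fin m // ¬ i ∈ H0} => p i.1 ω) ℓ
        = (H0ᶜ.filter (fun i => p i ω ≤ τ ℓ)).card := by
    intro ω ℓ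
    show ((Finset.univ : Finset {i : Fin m // ¬ i ∈ H0}).filter
      (fun i => p i.1 ω ≤ τ ℓ)).card = _
    rw [FDX.card_filter_subtype_p (fun i : Fin m => ¬ i ∈ H0) (fun i => p i ω ≤ τ ℓ)]
    rw [hcompl_eq]
  have hB_eq : ∀ (ω : Ω) (t : ℝ),
      ((Finset.univ : Finset {i : Fin m // i ∈ H0}).filter (fun i => p i.1 ω ≤ t)).card
        = (H0.filter (fun i => p i ω ≤ t)).card := by
    intro ω t
    exact FDX.card_filter_subtype_s5 H0 (fun i => p i ω ≤ t)
  -- deterministic inclusion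
  have hincl : {ω | α < FDX.FDP H0 (FDX.sdReject (fun i => p i ω) τ)}
      ⊆ ⋃ j ∈ Finset.Icc 1 m, Aset j ∩ Bset j := by
    intro ω hω
    simp only [Set.mem_setOf_eq] at hω
    set q : Fin m → ℝ := fun i => p i ω with hq
    set L := FDX.sdIndex q τ with hLdef
    have hLfg : L = Nat.findGreatest
        (fun ℓ => ∀ ℓ', 1 ≤ ℓ' → ℓ' ≤ ℓ → ℓ' ≤ FDX.countLe q (τ ℓ')) m := rfl
    have hLm : L ≤ m := Nat.findGreatest_le
      (P := fun ℓ => ∀ ℓ', 1 ≤ ℓ' → ℓ' ≤ ℓ → ℓ' ≤ FDX.countLe q (τ ℓ')) m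
    have hL1 : 1 ≤ L := by
      by_contra hc
      have hL0 : L = 0 := by omega
      rw [FDX.sdReject, ← hLdef, if_pos hL0, FDX.FDP] at hω
      simp only [Finset.empty_inter, Finset.card_empty, Nat.cast_zero, zero_div] at hω
      exact absurd hω (not_lt.mpr (le_of_lt hα.1))
    have hpass : ∀ ℓ', 1 ≤ ℓ' → ℓ' ≤ L → ℓ' ≤ FDX.countLe q (τ ℓ') := by
      have h0 : ∀ ℓ', 1 ≤ ℓ' → ℓ' ≤ 0 → ℓ' ≤ FDX.countLe q (τ ℓ') := by
        intro ℓ' h1 h2; omega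
      exact Nat.findGreatest_spec
        (P := fun ℓ => ∀ ℓ', 1 ≤ ℓ' → ℓ' ≤ ℓ → ℓ' ≤ FDX.countLe q (τ ℓ'))
        (Nat.zero_le m) h0
    have hfail : L < m → FDX.countLe q (τ (L + 1)) ≤ L := by
      intro hLlt
      have hng := Nat.findGreatest_is_greatest
        (P := fun ℓ => ∀ ℓ', 1 ≤ ℓ' → ℓ' ≤ ℓ → ℓ' ≤ FDX.countLe q (τ ℓ'))
        (n := m) (k := L + 1) (by omega) (by omega)
      by_contra hc
      push_neg at hc
      apply hng
      intro ℓ' h1 h2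
      rcases Nat.lt_or_ge ℓ' (L + 1) with h | h
      · exact hpass ℓ' h1 (by omega)
      · have heq : ℓ' = L + 1 := by omega
        rw [heq]; omega
    have hRdef : FDX.sdReject q τ = Finset.univ.filter (fun i => q i ≤ τ L) := by
      rw [FDX.sdReject, ← hLdef, if_neg (by omega)]
    have hcL : L ≤ FDX.countLe q (τ L) := hpass L hL1 (le_refl L)
    have hbadV : FDX.kfun α L ≤ (H0.filter (fun i => q i ≤ τ L)).card := by
      rw [FDX.FDP, hRdef] at hω
      have hinter : (Finset.univ.filter (fun i => q i ≤ τ L)) ∩ H0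
          = H0.filter (fun i => q i ≤ τ L) := by
        ext i
        simp only [Finset.mem_inter, Finset.mem_filter, Finset.mem_univ, true_and]
        tauto
      rw [hinter] at hω
      have hcard_eq : (Finset.univ.filter (fun i => q i ≤ τ L)).card = FDX.countLe q (τ L) := rfl
      rw [hcard_eq] at hω
      set V := (H0.filter (fun i => q i ≤ τ L)).card with hV
      set c := FDX.countLe q (τ L) with hc
      have hc1 : 1 ≤ c := le_trans hL1 hcL
      have hmax : max ((c:ℕ):ℝ) 1 = (c:ℝ) := max_eq_left (by exact_mod_cast hc1)
      rw [hmax] at hω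
      have hcpos : (0:ℝ) < c := by exact_mod_cast hc1
      have h1 : α * (c:ℝ) < (V:ℝ) := (lt_div_iff₀ hcpos).mp hω
      have h2 : α * (L:ℝ) ≤ α * (c:ℝ) := by
        apply mul_le_mul_of_nonneg_left _ hα0.le
        exact_mod_cast hcL
      have h3 : α * (L:ℝ) < (V:ℝ) := lt_of_le_of_lt h2 h1
      have h4 : ⌊α * (L:ℝ)⌋₊ < V := by
        rw [Nat.floor_lt (by positivity)]
        exact h3
      rw [FDX.kfun]
      omega
    -- count functions
    set x := fun i : {i : Fin m // ¬ i ∈ H0} => p i.1 ω with hx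
    set Vf : ℕ → ℕ := fun ℓ => (H0.filter (fun i => q i ≤ τ ℓ)).card with hVf
    have hqx : ∀ ℓ, scnt x ℓ = (H0ᶜ.filter (fun i => q i ≤ τ ℓ)).card :=
      fun ℓ => hsf_eq ω ℓ
    have hVmono : ∀ ℓ ℓ', 1 ≤ ℓ → ℓ ≤ ℓ' → ℓ' ≤ m → Vf ℓ ≤ Vf ℓ' := by
      intro ℓ ℓ' h1 h2 h3
      apply Finset.card_le_card
      apply Finset.monotone_filter_right
      intro i _ hi
      exact le_trans hi (hτmono ℓ ℓ' h1 h2 h3)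
    have hsmono : ∀ ℓ ℓ', 1 ≤ ℓ → ℓ ≤ ℓ' → ℓ' ≤ m → scnt x ℓ ≤ scnt x ℓ' := by
      intro ℓ ℓ' h1 h2 h3
      rw [hqx, hqx]
      apply Finset.card_le_card
      apply Finset.monotone_filter_right
      intro i _ hi
      exact le_trans hi (hτmono ℓ ℓ' h1 h2 h3)
    have hpass' : ∀ ℓ', 1 ≤ ℓ' → ℓ' ≤ L → ℓ' ≤ Vf ℓ' + scnt x ℓ' := by
      intro ℓ' h1 h2
      have h3 := hpass ℓ' h1 h2
      rw [hcount_split] at h3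
      have h4 := hqx ℓ'
      simp only [hVf]
      omega
    have hfail' : L < m → Vf (L + 1) + scnt x (L + 1) ≤ L := by
      intro hLlt
      have h3 := hfail hLlt
      rw [hcount_split] at h3
      have h4 := hqx (L + 1)
      simp only [hVf]
      omega
    have hcross := FDX.jfun_cross m L (FDX.kfun α) Vf (scnt x) hL1 hLm hsmono hVmono
      hpass' hfail' hbadV
    have hjmem := FDX.jfun_mem m hm (FDX.kfun α) (scnt x)
    have hjIcc : jfn x ∈ Finset.Icc 1 m := Finset.mem_Icc.mpr ⟨hjmem.1, hjmem.2.1⟩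
    simp only [Set.mem_iUnion]
    exact ⟨jfn x, hjIcc, (rfl : jfn _ = jfn x), hcross⟩
  -- measurability
  have hmeas_alt : Measurable (fun ω => fun i : {i : Fin m // ¬ i ∈ H0} => p i.1 ω) :=
    measurable_pi_lambda _ (fun i => hmeas i.1)
  have hmeas_null : Measurable (fun ω => fun i : {i : Fin m // i ∈ H0} => p i.1 ω) :=
    measurable_pi_lambda _ (fun i => hmeas i.1)
  have hscnt_meas : ∀ ℓ, Measurable (fun x => scnt x ℓ) := by
    intro ℓ
    rw [hscnt]
    exact FDX.measurable_count (τ ℓ)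
  have hSA_meas : ∀ j, MeasurableSet {x : {i : Fin m // ¬ i ∈ H0} → ℝ | jfn x = j} := by
    intro j
    have hset : {x : {i : Fin m // ¬ i ∈ H0} → ℝ | jfn x = j}
        = {x | (1 ≤ j ∧ (j = m ∨ scnt x (j + 1) + FDX.kfun α j ≤ j))}
          ∩ ⋂ ℓ ∈ Finset.range j,
            {x | ¬(1 ≤ ℓ ∧ (ℓ = m ∨ scnt x (ℓ + 1) + FDX.kfun α ℓ ≤ ℓ))} := by
      ext x
      simp only [Set.mem_setOf_eq, Set.mem_inter_iff, Set.mem_iInter, Finset.mem_range]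
      exact FDX.jfun_eq_iff m hm (FDX.kfun α) (scnt x) j
    rw [hset]
    have hD : ∀ ℓ : ℕ, MeasurableSet
        {x : {i : Fin m // ¬ i ∈ H0} → ℝ | 1 ≤ ℓ ∧ (ℓ = m ∨ scnt x (ℓ + 1) + FDX.kfun α ℓ ≤ ℓ)} := by
      intro ℓ
      by_cases h1 : 1 ≤ ℓ
      · by_cases h2 : ℓ = m
        · have : {x : {i : Fin m // ¬ i ∈ H0} → ℝ |
              1 ≤ ℓ ∧ (ℓ = m ∨ scnt x (ℓ + 1) + FDX.kfun α ℓ ≤ ℓ)} = Set.univ := by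
            ext xx
            simp only [Set.mem_setOf_eq, Set.mem_univ, iff_true]
            exact ⟨h1, Or.inl h2⟩
          rw [this]; exact MeasurableSet.univ
        · have : {x : {i : Fin m // ¬ i ∈ H0} → ℝ |
              1 ≤ ℓ ∧ (ℓ = m ∨ scnt x (ℓ + 1) + FDX.kfun α ℓ ≤ ℓ)}
              = (fun x => scnt x (ℓ + 1)) ⁻¹' {n | n + FDX.kfun α ℓ ≤ ℓ} := by
            ext xx; simp [h1, h2]
          rw [this]
          exact hscnt_meas (ℓ + 1) (by trivial)
      · have : {x : {i : Fin m // ¬ i ∈ H0} → ℝ |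
            1 ≤ ℓ ∧ (ℓ = m ∨ scnt x (ℓ + 1) + FDX.kfun α ℓ ≤ ℓ)} = ∅ := by
          ext xx; simp [h1]
        rw [this]; exact MeasurableSet.empty
    apply MeasurableSet.inter
    · exact hD j
    · apply MeasurableSet.biInter (Set.to_countable _)
      intro ℓ _
      exact (hD ℓ).compl
  have hA_meas : ∀ j, MeasurableSet (Aset j) := by
    intro j
    rw [hAset]
    exact hmeas_alt (hSA_meas j)
  -- B as preimage
  have hB_preim : ∀ j, Bset j = (fun ω => fun i : {i : Fin m // i ∈ H0} => p i.1 ω) ⁻¹'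
      {x : {i : Fin m // i ∈ H0} → ℝ |
        FDX.kfun α j ≤ ((Finset.univ : Finset {i : Fin m // i ∈ H0}).filter
          (fun i => x i ≤ τ j)).card} := by
    intro j
    rw [hBset]
    ext ω
    simp only [Set.mem_setOf_eq, Set.mem_preimage]
    rw [hB_eq ω (τ j)]
  have hSB_meas : ∀ j, MeasurableSet
      {x : {i : Fin m // i ∈ H0} → ℝ |
        FDX.kfun α j ≤ ((Finset.univ : Finset {i : Fin m // i ∈ H0}).filter
          (fun i => x i ≤ τ j)).card} := by
    intro j
    exact FDX.measurable_count (τ j) (by trivial :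
      MeasurableSet {n : ℕ | FDX.kfun α j ≤ n})
  -- independence product
  have hprod : ∀ j, P (Aset j ∩ Bset j) = P (Aset j) * P (Bset j) := by
    intro j
    have h := indepFun_iff_measure_inter_preimage_eq_mul.mp hIndep01
    rw [hB_preim j, hAset, Set.inter_comm]
    rw [h _ _ (hSB_meas j) (hSA_meas j)]
    ring
  -- the per-index tail bound
  have hvalid : ∀ j, (Aset j).Nonempty → 1 ≤ j ∧ j ≤ m ∧ H0.card ≤ FDX.mfun α m j := by
    intro j hne
    obtain ⟨ω, hω⟩ := hne
    rw [hAset] at hω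
    simp only [Set.mem_preimage, Set.mem_setOf_eq] at hω
    set x := fun i : {i : Fin m // ¬ i ∈ H0} => p i.1 ω with hx
    have hjmem := FDX.jfun_mem m hm (FDX.kfun α) (scnt x)
    have hval := FDX.jfun_valid m m1 hm (FDX.kfun α) (scnt x) hk1 hkmono (hscnt_le x)
    have hω' : FDX.jfun m (FDX.kfun α) (scnt x) = j := hω
    rw [hω'] at hjmem hval
    refine ⟨hjmem.1, hjmem.2.1, ?_⟩
    have hj_le : j ≤ FDX.kfun α j + m1 := hval
    rw [FDX.mfun]
    rw [FDX.kfun] at hj_le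
    omega
  have hBbound : ∀ j, 1 ≤ j → j ≤ m → H0.card ≤ FDX.mfun α m j →
      P (Bset j) ≤ ENNReal.ofReal ζ := by
    intro j h1 h2 hcard
    have hjIcc : j ∈ Finset.Icc 1 m := Finset.mem_Icc.mpr ⟨h1, h2⟩
    have hτj : τ j ∈ Set.Icc (0:ℝ) 1 := hτ01 j hjIcc
    set v : Fin m → ℝ := fun i => F i (τ j) with hv
    have hv01 : ∀ i, 0 ≤ v i ∧ v i ≤ 1 := by
      intro i
      have := hF01 i (τ j) hτj
      exact ⟨this.1, this.2⟩
    have hstep1 : P (Bset j) ≤ ENNReal.ofReal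
        (FDX.pbinTail (Finset.univ : Finset {i : Fin m // i ∈ H0})
          (fun i => v i.1) (FDX.kfun α j)) := by
      have hctl := FDX.count_tail_le (P := P)
        (fun (i : {i : Fin m // i ∈ H0}) => fun ω => p i.1 ω)
        (fun i => hmeas i.1) hIndep0 (τ j) (fun i => v i.1)
        (fun i => (hv01 i.1).1) (fun i => (hv01 i.1).2)
        (fun i => hF i.1 i.2 (τ j) hτj)
        (Finset.univ : Finset {i : Fin m // i ∈ H0}) (FDX.kfun α j)
      have hBev : Bset j = {ω | FDX.kfun α j ≤
          ((Finset.univ : Finset {i : Fin m // i ∈ H0}).filter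
            (fun i => p i.1 ω ≤ τ j)).card} := by
        rw [hBset]
        ext ω
        simp only [Set.mem_setOf_eq]
        rw [hB_eq ω (τ j)]
      rw [hBev]
      exact hctl
    -- pbinTail chain
    have hchain1 : FDX.pbinTail (Finset.univ : Finset {i : Fin m // i ∈ H0})
        (fun i => v i.1) (FDX.kfun α j) ≤ FDX.pbinTail H0 v (FDX.kfun α j) := by
      have himg : (Finset.univ : Finset {i : Fin m // i ∈ H0}).image Subtype.val = H0 := by
        rw [Finset.univ_eq_attach, Finset.attach_image_val]
      have := FDX.pbinTail_le_image (Subtype.val)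
        (Finset.univ : Finset {i : Fin m // i ∈ H0}) (fun i => v i.1) v (FDX.kfun α j)
        (fun a _ b _ h => Subtype.ext h)
        (fun i _ => (hv01 i.1).1) (fun i _ => le_refl _) (fun i _ => (hv01 i.1).2)
      rwa [himg] at this
    obtain ⟨φ, hinj, hlt, hdom⟩ := FDX.exists_desc_inj v H0 (FDX.mfun α m j) hcard
    have hdesc01 : ∀ idx : Fin m, 0 ≤ FDX.descSort v idx ∧ FDX.descSort v idx ≤ 1 := by
      intro idx
      exact hv01 _
    have hchain2 : FDX.pbinTail H0 v (FDX.kfun α j)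
        ≤ FDX.pbinTail (H0.image φ) (FDX.descSort v) (FDX.kfun α j) := by
      apply FDX.pbinTail_le_image φ H0 v (FDX.descSort v) (FDX.kfun α j) hinj
      · intro i _; exact (hv01 i).1
      · intro i hi; exact hdom i hi
      · intro i _; exact (hdesc01 _).2
    have hchain3 : FDX.pbinTail (H0.image φ) (FDX.descSort v) (FDX.kfun α j)
        ≤ FDX.pbinTail (Finset.univ.filter (fun i : Fin m => (i : ℕ) < FDX.mfun α m j))
          (FDX.descSort v) (FDX.kfun α j) := by
      apply FDX.pbinTail_le_superset
      · intro i hi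
        obtain ⟨b, hb, rfl⟩ := Finset.mem_image.mp hi
        rw [Finset.mem_filter]
        exact ⟨Finset.mem_univ _, hlt b hb⟩
      · intro i _; exact (hdesc01 _).1
      · intro i _; exact (hdesc01 _).2
    have hfinal : FDX.pbinTail (Finset.univ.filter (fun i : Fin m => (i : ℕ) < FDX.mfun α m j))
        (FDX.descSort v) (FDX.kfun α j) ≤ ζ := hcrit j hjIcc
    calc P (Bset j) ≤ ENNReal.ofReal
          (FDX.pbinTail (Finset.univ : Finset {i : Fin m // i ∈ H0})
            (fun i => v i.1) (FDX.kfun α j)) := hstep1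
      _ ≤ ENNReal.ofReal ζ := by
          apply ENNReal.ofReal_le_ofReal
          exact le_trans hchain1 (le_trans hchain2 (le_trans hchain3 hfinal))
  -- put it together
  have hdisjA : Set.PairwiseDisjoint (↑(Finset.Icc 1 m) : Set ℕ) Aset := by
    intro j _ j' _ hne
    apply Set.disjoint_left.mpr
    intro ω h1 h2
    rw [hAset] at h1 h2
    simp only [Set.mem_preimage, Set.mem_setOf_eq] at h1 h2
    exact hne (h1 ▸ h2 ▸ rfl)
  calc P {ω | α < FDX.FDP H0 (FDX.sdReject (fun i => p i ω) τ)}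
      ≤ P (⋃ j ∈ Finset.Icc 1 m, Aset j ∩ Bset j) := measure_mono hincl
  _ ≤ ∑ j ∈ Finset.Icc 1 m, P (Aset j ∩ Bset j) := measure_biUnion_finset_le _ _
  _ ≤ ∑ j ∈ Finset.Icc 1 m, P (Aset j) * ENNReal.ofReal ζ := by
      apply Finset.sum_le_sum
      intro j hj
      rcases Set.eq_empty_or_nonempty (Aset j) with he | hne
      · rw [he, Set.empty_inter, measure_empty]
        exact zero_le
      · obtain ⟨h1, h2, h3⟩ := hvalid j hne
        rw [hprod j]
        exact mul_le_mul_right (hBbound j h1 h2 h3) _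
  _ = (∑ j ∈ Finset.Icc 1 m, P (Aset j)) * ENNReal.ofReal ζ := by
      rw [Finset.sum_mul]
  _ ≤ 1 * ENNReal.ofReal ζ := by
      apply mul_le_mul_left
      rw [← measure_biUnion_finset hdisjA (fun j _ => hA_meas j)]
      exact prob_le_one
  _ = ENNReal.ofReal ζ := one_mul _
end

section
/- (The Poisson-binomial procedure rejects at least as much as Guo–Romano under super-uniformity.) Let α, ζ ∈ (0,1), A ⊆ [0,1], and F_1,…,F_m : [0,1] → [0,1] be nondecreasing functions with F_i(t) ≤ t for all i and t ∈ [0,1]. For ℓ ∈ {1,…,m} define ξ^GR_ℓ(t) = P(Bin[m(ℓ), t] ≥ ⌊αℓ⌋ + 1) and ξ^PB_ℓ(t) = P( PBin[ ((F(t))_{(j)})_{1≤j≤m(ℓ)} ] ≥ ⌊αℓ⌋ + 1 ), where (F(t))_{(1)} ≥ … ≥ (F(t))_{(m)} are the values F_1(t),…,F_m(t) sorted nonincreasingly. Let τ^GR_ℓ = max{t ∈ [0,1] : ξ^GR_ℓ(t) ≤ ζ} (this maximum exists), and assume that for each ℓ the set {t ∈ A : ξ^PB_ℓ(t) ≤ ζ},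 if nonempty, admits a greatest element τ^PB_ℓ (τ^PB_ℓ = 0 if empty). Then for any p-values p_1,…,p_m all belonging to A, the step-down rejection set with critical values (τ^GR_ℓ) is contained in the step-down rejection set with critical values (τ^PB_ℓ). -/
open MeasureTheory ProbabilityTheory Finset

section Aux

open Finset

namespace FDXAux

variable {ι : Type*} [DecidableEq ι]

lemma pbinTail_eq_sum (s : Finset ι) (π : ι → ℝ) (k : ℕ) :
    FDX.pbinTail s π k = ∑ S ∈ s.powerset,
      (if k ≤ S.card then (∏ i ∈ S, π i) * ∏ i ∈ s \ S, (1 - π i) else 0) := by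
  rw [FDX.pbinTail, Finset.sum_filter]

lemma pbinTail_zero (s : Finset ι) (π : ι → ℝ) : FDX.pbinTail s π 0 = 1 := by
  rw [FDX.pbinTail]
  have h : s.powerset.filter (fun S => 0 ≤ S.card) = s.powerset := by simp
  rw [h, ← Finset.prod_add]
  simp

lemma pbinTail_insert {i : ι} {s : Finset ι} (hi : i ∉ s) (π : ι → ℝ) (k : ℕ) :
    FDX.pbinTail (insert i s) π k
      = π i * FDX.pbinTail s π (k - 1) + (1 - π i) * FDX.pbinTail s π k := by
  rw [pbinTail_eq_sum, pbinTail_eq_sum, pbinTail_eq_sum, Finset.sum_powerset_insert hi]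
  have h1 : ∑ T ∈ s.powerset,
      (if k ≤ T.card then (∏ j ∈ T, π j) * ∏ j ∈ insert i s \ T, (1 - π j) else 0)
      = (1 - π i) * ∑ T ∈ s.powerset,
      (if k ≤ T.card then (∏ j ∈ T, π j) * ∏ j ∈ s \ T, (1 - π j) else 0) := by
    rw [Finset.mul_sum]
    refine Finset.sum_congr rfl fun T hT => ?_
    have hTs : T ⊆ s := Finset.mem_powerset.1 hT
    have hiT : i ∉ T := fun h => hi (hTs h)
    have hsd : insert i s \ T = insert i (s \ T) := Finset.insert_sdiff_of_notMem _ hiT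
    have hisdT : i ∉ s \ T := fun h => hi (Finset.mem_sdiff.1 h).1
    rw [hsd, Finset.prod_insert hisdT]
    split_ifs <;> ring
  have h2 : ∑ T ∈ s.powerset,
      (if k ≤ (insert i T).card then
        (∏ j ∈ insert i T, π j) * ∏ j ∈ insert i s \ insert i T, (1 - π j) else 0)
      = π i * ∑ T ∈ s.powerset,
      (if k - 1 ≤ T.card then (∏ j ∈ T, π j) * ∏ j ∈ s \ T, (1 - π j) else 0) := by
    rw [Finset.mul_sum]
    refine Finset.sum_congr rfl fun T hT => ?_
    have hTs : T ⊆ s := Finset.mem_powerset.1 hT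
    have hiT : i ∉ T := fun h => hi (hTs h)
    have hsd : insert i s \ insert i T = s \ T := by
      ext x
      simp only [Finset.mem_sdiff, Finset.mem_insert, not_or]
      constructor
      · rintro ⟨hx1 | hx1, hx2, hx3⟩
        · exact absurd hx1 hx2
        · exact ⟨hx1, hx3⟩
      · rintro ⟨hx1, hx2⟩
        exact ⟨Or.inr hx1, fun h => hi (h ▸ hx1), hx2⟩
    have hcard : (insert i T).card = T.card + 1 := Finset.card_insert_of_notMem hiT
    have hiff : (k ≤ (insert i T).card) ↔ (k - 1 ≤ T.card) := by rw [hcard]; omega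
    rw [hsd, Finset.prod_insert hiT]
    by_cases h : k - 1 ≤ T.card
    · rw [if_pos (hiff.2 h), if_pos h]; ring
    · rw [if_neg (fun hh => h (hiff.1 hh)), if_neg h]; ring
  rw [h1, h2]; ring

lemma pbinTail_empty (π : ι → ℝ) (k : ℕ) :
    FDX.pbinTail (∅ : Finset ι) π k = if k = 0 then 1 else 0 := by
  rcases Nat.eq_zero_or_pos k with hk | hk
  · subst hk; rw [pbinTail_zero]; simp
  · rw [if_neg (Nat.pos_iff_ne_zero.1 hk), FDX.pbinTail]
    apply Finset.sum_eq_zero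
    intro S hS
    simp only [Finset.mem_filter, Finset.mem_powerset, Finset.subset_empty] at hS
    obtain ⟨h1, h2⟩ := hS
    subst h1
    simp only [Finset.card_empty, Nat.le_zero] at h2
    omega

lemma pbinTail_nonneg {s : Finset ι} {π : ι → ℝ} (h0 : ∀ i ∈ s, 0 ≤ π i)
    (h1 : ∀ i ∈ s, π i ≤ 1) (k : ℕ) : 0 ≤ FDX.pbinTail s π k := by
  refine Finset.sum_nonneg fun S hS => ?_
  simp only [Finset.mem_filter, Finset.mem_powerset] at hS
  refine mul_nonneg (Finset.prod_nonneg fun i hi => h0 i (hS.1 hi))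
    (Finset.prod_nonneg fun i hi => ?_)
  have : i ∈ s := (Finset.mem_sdiff.1 hi).1
  linarith [h1 i this]

lemma pbinTail_anti_k {s : Finset ι} {π : ι → ℝ} (h0 : ∀ i ∈ s, 0 ≤ π i)
    (h1 : ∀ i ∈ s, π i ≤ 1) {k k' : ℕ} (hk : k ≤ k') :
    FDX.pbinTail s π k' ≤ FDX.pbinTail s π k := by
  unfold FDX.pbinTail
  refine Finset.sum_le_sum_of_subset_of_nonneg
    (Finset.monotone_filter_right _ fun S _ h => le_trans hk h) ?_
  intro S hS _
  simp only [Finset.mem_filter, Finset.mem_powerset] at hS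
  refine mul_nonneg (Finset.prod_nonneg fun i hi => h0 i (hS.1 hi))
    (Finset.prod_nonneg fun i hi => ?_)
  have : i ∈ s := (Finset.mem_sdiff.1 hi).1
  linarith [h1 i this]

/-- The tail is at least the tail over a subset obtained by deleting one element. -/
lemma le_pbinTail_insert {i : ι} {s : Finset ι} (hi : i ∉ s) {π : ι → ℝ}
    (h0 : ∀ j ∈ insert i s, 0 ≤ π j) (h1 : ∀ j ∈ insert i s, π j ≤ 1) (k : ℕ) :
    FDX.pbinTail s π k ≤ FDX.pbinTail (insert i s) π k := by
  have h0' : ∀ j ∈ s, 0 ≤ π j := fun j hj => h0 j (Finset.mem_insert_of_mem hj)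
  have h1' : ∀ j ∈ s, π j ≤ 1 := fun j hj => h1 j (Finset.mem_insert_of_mem hj)
  rw [pbinTail_insert hi]
  have hT : FDX.pbinTail s π k ≤ FDX.pbinTail s π (k - 1) :=
    pbinTail_anti_k h0' h1' (Nat.sub_le k 1)
  have hπi0 : 0 ≤ π i := h0 i (Finset.mem_insert_self i s)
  nlinarith

/-- Monotonicity of the Poisson-binomial tail in the success probabilities. -/
lemma pbinTail_mono_pi {s : Finset ι} {π π' : ι → ℝ}
    (h0 : ∀ i ∈ s, 0 ≤ π i) (h1' : ∀ i ∈ s, π' i ≤ 1)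
    (hle : ∀ i ∈ s, π i ≤ π' i) (k : ℕ) :
    FDX.pbinTail s π k ≤ FDX.pbinTail s π' k := by
  classical
  induction s using Finset.induction_on generalizing k with
  | empty => rw [pbinTail_empty, pbinTail_empty]
  | @insert i s hi ih =>
    have h0s : ∀ j ∈ s, 0 ≤ π j := fun j hj => h0 j (Finset.mem_insert_of_mem hj)
    have h1s' : ∀ j ∈ s, π' j ≤ 1 := fun j hj => h1' j (Finset.mem_insert_of_mem hj)
    have hles : ∀ j ∈ s, π j ≤ π' j := fun j hj => hle j (Finset.mem_insert_of_mem hj)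
    have h0s' : ∀ j ∈ s, 0 ≤ π' j := fun j hj => le_trans (h0s j hj) (hles j hj)
    have h1s : ∀ j ∈ s, π j ≤ 1 := fun j hj => le_trans (hles j hj) (h1s' j hj)
    have hi0 : 0 ≤ π i := h0 i (Finset.mem_insert_self i s)
    have hi0' : 0 ≤ π' i := le_trans hi0 (hle i (Finset.mem_insert_self i s))
    have hi1' : π' i ≤ 1 := h1' i (Finset.mem_insert_self i s)
    have hii : π i ≤ π' i := hle i (Finset.mem_insert_self i s)
    rw [pbinTail_insert hi, pbinTail_insert hi]
    have hmono1 : FDX.pbinTail s π (k - 1) ≤ FDX.pbinTail s π' (k - 1) :=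
      ih h0s h1s' hles (k - 1)
    have hmono2 : FDX.pbinTail s π k ≤ FDX.pbinTail s π' k := ih h0s h1s' hles k
    have hanti : FDX.pbinTail s π k ≤ FDX.pbinTail s π (k - 1) :=
      pbinTail_anti_k h0s h1s (Nat.sub_le k 1)
    nlinarith

/-- The Poisson-binomial tail with constant probabilities is a binomial tail. -/
lemma pbinTail_const (s : Finset ι) (t : ℝ) (k : ℕ) :
    FDX.pbinTail s (fun _ => t) k = FDX.binTail s.card t k := by
  rw [pbinTail_eq_sum, Finset.sum_powerset]
  have hstep : ∀ j ∈ Finset.range (s.card + 1),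
      (∑ S ∈ Finset.powersetCard j s,
        (if k ≤ S.card then (∏ _i ∈ S, t) * ∏ _i ∈ s \ S, (1 - t) else 0))
      = (if k ≤ j then (s.card.choose j : ℝ) * t ^ j * (1 - t) ^ (s.card - j) else 0) := by
    intro j hj
    have : ∀ S ∈ Finset.powersetCard j s,
        (if k ≤ S.card then (∏ _i ∈ S, t) * ∏ _i ∈ s \ S, (1 - t) else 0)
        = (if k ≤ j then t ^ j * (1 - t) ^ (s.card - j) else 0) := by
      intro S hS
      obtain ⟨hSs, hScard⟩ := Finset.mem_powersetCard.1 hS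
      have hcsd : (s \ S).card = s.card - j := by
        rw [Finset.card_sdiff_of_subset hSs, hScard]
      rw [Finset.prod_const, Finset.prod_const, hScard, hcsd]
    rw [Finset.sum_congr rfl this, Finset.sum_const, Finset.card_powersetCard,
      nsmul_eq_mul]
    split_ifs <;> ring
  rw [Finset.sum_congr rfl hstep, FDX.binTail, Finset.sum_ite, Finset.sum_const_zero,
    add_zero]
  apply Finset.sum_congr
  · ext j
    simp only [Finset.mem_filter, Finset.mem_range, Finset.mem_Icc]
    omega
  · intros; rfl

lemma filter_lt_card (m n : ℕ) (h : n ≤ m) :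
    (Finset.univ.filter (fun j : Fin m => (j : ℕ) < n)).card = n := by
  have heq : (Finset.univ.filter (fun j : Fin m => (j : ℕ) < n))
      = Finset.map (Fin.castLEEmb h) Finset.univ := by
    ext j
    simp only [Finset.mem_filter, Finset.mem_univ, true_and, Finset.mem_map,
      Fin.castLEEmb_apply]
    constructor
    · intro hj; exact ⟨⟨(j : ℕ), hj⟩, rfl⟩
    · rintro ⟨i, rfl⟩
      simpa using i.isLt
  rw [heq, Finset.card_map, Finset.card_univ, Fintype.card_fin]

end FDXAux

end Aux

/-- Under super-uniformity (`F_i(t) ≤ t`), the step-down rejection set of the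
Guo–Romano procedure (critical values `τ^GR_ℓ`, the greatest `t ∈ [0,1]` with
`P(Bin[m(ℓ),t] ≥ ⌊αℓ⌋+1) ≤ ζ`) is contained in that of the Poisson-binomial procedure
(critical values `τ^PB_ℓ`, the greatest element of `{t ∈ A : ξ^PB_ℓ(t) ≤ ζ}`, or `0` if
empty), for p-values lying in `A`. -/
theorem stmt_6
    {m : ℕ} {α ζ : ℝ} (hα : α ∈ Set.Ioo (0 : ℝ) 1) (hζ : ζ ∈ Set.Ioo (0 : ℝ) 1)
    (A : Set ℝ) (hA : A ⊆ Set.Icc 0 1)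
    (F : Fin m → ℝ → ℝ)
    (hFmono : ∀ i, MonotoneOn (F i) (Set.Icc (0 : ℝ) 1))
    (hF01 : ∀ i, ∀ t ∈ Set.Icc (0 : ℝ) 1, F i t ∈ Set.Icc (0 : ℝ) 1)
    (hFsup : ∀ i, ∀ t ∈ Set.Icc (0 : ℝ) 1, F i t ≤ t)
    (ξGR ξPB : ℕ → ℝ → ℝ)
    (hξGR : ∀ ℓ t, ξGR ℓ t = FDX.binTail (FDX.mfun α m ℓ) t (FDX.kfun α ℓ))
    (hξPB : ∀ ℓ t, ξPB ℓ t =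
      FDX.pbinTail (Finset.univ.filter (fun j : Fin m => (j : ℕ) < FDX.mfun α m ℓ))
        (FDX.descSort (fun i => F i t)) (FDX.kfun α ℓ))
    (τGR τPB : ℕ → ℝ)
    (hτGR : ∀ ℓ ∈ Finset.Icc 1 m,
      IsGreatest {t | t ∈ Set.Icc (0 : ℝ) 1 ∧ ξGR ℓ t ≤ ζ} (τGR ℓ))
    (hτPB : ∀ ℓ ∈ Finset.Icc 1 m,
      IsGreatest {t | t ∈ A ∧ ξPB ℓ t ≤ ζ} (τPB ℓ) ∨
        ({t | t ∈ A ∧ ξPB ℓ t ≤ ζ} = ∅ ∧ τPB ℓ = 0))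
    (p : Fin m → ℝ) (hp : ∀ i, p i ∈ A) :
    FDX.sdReject p τGR ⊆ FDX.sdReject p τPB := by
  classical
  obtain ⟨hα0, hα1⟩ := hα
  -- basic floor fact: ⌊α ℓ⌋ < ℓ for ℓ ≥ 1
  have hfloor_lt : ∀ ℓ : ℕ, 1 ≤ ℓ → ⌊α * ℓ⌋₊ < ℓ := by
    intro ℓ hℓ
    rw [Nat.floor_lt (by positivity)]
    have hℓR : (1 : ℝ) ≤ (ℓ : ℝ) := by exact_mod_cast hℓ
    nlinarith
  have hmfun_le : ∀ ℓ : ℕ, 1 ≤ ℓ → ℓ ≤ m → FDX.mfun α m ℓ ≤ m := by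
    intro ℓ h1 h2
    have := hfloor_lt ℓ h1
    unfold FDX.mfun
    omega
  -- π bounds
  have hπ01 : ∀ t ∈ Set.Icc (0:ℝ) 1, ∀ j : Fin m,
      FDX.descSort (fun i => F i t) j ∈ Set.Icc (0:ℝ) 1 := by
    intro t ht j
    exact hF01 _ t ht
  have hπle : ∀ t ∈ Set.Icc (0:ℝ) 1, ∀ j : Fin m,
      FDX.descSort (fun i => F i t) j ≤ t := by
    intro t ht j
    exact hFsup _ t ht
  -- Claim A: if t ∈ A and t ≤ τGR ℓ then ξPB ℓ t ≤ ζ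
  have keyA : ∀ ℓ, 1 ≤ ℓ → ℓ ≤ m → ∀ t, t ∈ A → t ≤ τGR ℓ → ξPB ℓ t ≤ ζ := by
    intro ℓ hℓ1 hℓm t htA htle
    have hℓIcc : ℓ ∈ Finset.Icc 1 m := Finset.mem_Icc.2 ⟨hℓ1, hℓm⟩
    obtain ⟨⟨hτ01, hτζ⟩, -⟩ := hτGR ℓ hℓIcc
    have ht01 : t ∈ Set.Icc (0:ℝ) 1 := hA htA
    rw [hξPB]
    set s := Finset.univ.filter (fun j : Fin m => (j : ℕ) < FDX.mfun α m ℓ) with hs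
    have h1 : FDX.pbinTail s (FDX.descSort (fun i => F i t)) (FDX.kfun α ℓ)
        ≤ FDX.pbinTail s (fun _ => τGR ℓ) (FDX.kfun α ℓ) := by
      apply FDXAux.pbinTail_mono_pi
      · intro j _; exact (hπ01 t ht01 j).1
      · intro j _; exact hτ01.2
      · intro j _; exact le_trans (hπle t ht01 j) htle
    have hcard : s.card = FDX.mfun α m ℓ :=
      FDXAux.filter_lt_card m _ (hmfun_le ℓ hℓ1 hℓm)
    rw [FDXAux.pbinTail_const, hcard] at h1
    refine le_trans h1 ?_
    rw [← hξGR]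
    exact hτζ
  -- Claim B (single step): ξPB (n+1) t ≤ ξPB n t
  have keyBstep : ∀ t ∈ Set.Icc (0:ℝ) 1, ∀ n : ℕ, 1 ≤ n → n + 1 ≤ m →
      ξPB (n + 1) t ≤ ξPB n t := by
    intro t ht n hn1 hnm
    have hab : ⌊α * n⌋₊ ≤ ⌊α * (n + 1 : ℕ)⌋₊ := by
      apply Nat.floor_le_floor
      have : ((n : ℝ)) ≤ ((n : ℕ) + 1 : ℕ) := by push_cast; linarith
      nlinarith
    have hba : ⌊α * (n + 1 : ℕ)⌋₊ ≤ ⌊α * n⌋₊ + 1 := by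
      have h1 : α * ((n : ℕ) + 1 : ℕ) ≤ α * n + 1 := by
        push_cast
        nlinarith
      calc ⌊α * ((n : ℕ) + 1 : ℕ)⌋₊ ≤ ⌊α * n + 1⌋₊ := Nat.floor_le_floor h1
        _ = ⌊α * n⌋₊ + 1 := Nat.floor_add_one (by positivity)
    have h0b : ∀ j : Fin m, 0 ≤ FDX.descSort (fun i => F i t) j :=
      fun j => (hπ01 t ht j).1
    have h1b : ∀ j : Fin m, FDX.descSort (fun i => F i t) j ≤ 1 :=
      fun j => (hπ01 t ht j).2
    rcases Nat.lt_or_ge (⌊α * n⌋₊) (⌊α * (n + 1 : ℕ)⌋₊) with hcase | hcase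
    · -- floor increases by 1: same mfun, larger kfun
      have hb : ⌊α * (n + 1 : ℕ)⌋₊ = ⌊α * n⌋₊ + 1 := by omega
      have hmf : FDX.mfun α m (n + 1) = FDX.mfun α m n := by
        unfold FDX.mfun; omega
      have hkf : FDX.kfun α (n + 1) = FDX.kfun α n + 1 := by
        unfold FDX.kfun; omega
      rw [hξPB, hξPB, hmf, hkf]
      apply FDXAux.pbinTail_anti_k (fun j _ => h0b j) (fun j _ => h1b j)
      omega
    · -- floor stays: kfun same, mfun drops by one
      have hb : ⌊α * (n + 1 : ℕ)⌋₊ = ⌊α * n⌋₊ := by omega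
      have hkf : FDX.kfun α (n + 1) = FDX.kfun α n := by
        unfold FDX.kfun; omega
      have hfl : ⌊α * n⌋₊ < n := hfloor_lt n hn1
      have hNlt : FDX.mfun α m (n + 1) < m := by
        unfold FDX.mfun
        omega
      have hmf : FDX.mfun α m n = FDX.mfun α m (n + 1) + 1 := by
        unfold FDX.mfun; omega
      set N := FDX.mfun α m (n + 1) with hN
      have e : Fin m := ⟨N, hNlt⟩
      have hsplit : Finset.univ.filter (fun j : Fin m => (j : ℕ) < N + 1)
          = insert (⟨N, hNlt⟩ : Fin m)
              (Finset.univ.filter (fun j : Fin m => (j : ℕ) < N)) := by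
        ext j
        simp only [Finset.mem_filter, Finset.mem_univ, true_and, Finset.mem_insert,
          Fin.ext_iff]
        omega
      have hnotmem : (⟨N, hNlt⟩ : Fin m) ∉
          Finset.univ.filter (fun j : Fin m => (j : ℕ) < N) := by
        simp
      rw [hξPB, hξPB, hkf, hmf, hsplit]
      exact FDXAux.le_pbinTail_insert hnotmem (fun j _ => h0b j) (fun j _ => h1b j) _
  -- Claim B: ξPB antitone in ℓ on [1, m]
  have keyB : ∀ t ∈ Set.Icc (0:ℝ) 1, ∀ ℓ ℓ' : ℕ, 1 ≤ ℓ → ℓ ≤ ℓ' → ℓ' ≤ m →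
      ξPB ℓ' t ≤ ξPB ℓ t := by
    intro t ht ℓ ℓ' hℓ1 hℓℓ' hℓ'm
    induction ℓ' , hℓℓ' using Nat.le_induction with
    | base => exact le_refl _
    | succ n hn ih =>
      exact le_trans (keyBstep t ht n (le_trans hℓ1 hn) hℓ'm) (ih (by omega))
  -- p i ≤ τGR ℓ implies p i ≤ τPB ℓ
  have keyC : ∀ ℓ, 1 ≤ ℓ → ℓ ≤ m → ∀ i : Fin m, ξPB ℓ (p i) ≤ ζ → p i ≤ τPB ℓ := by
    intro ℓ h1 h2 i hξ
    have hmem : p i ∈ {t | t ∈ A ∧ ξPB ℓ t ≤ ζ} := ⟨hp i, hξ⟩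
    rcases hτPB ℓ (Finset.mem_Icc.2 ⟨h1, h2⟩) with hg | ⟨hemp, -⟩
    · exact hg.2 hmem
    · rw [Set.eq_empty_iff_forall_notMem] at hemp
      exact absurd hmem (hemp _)
  have hcnt : ∀ ℓ, 1 ≤ ℓ → ℓ ≤ m →
      FDX.countLe p (τGR ℓ) ≤ FDX.countLe p (τPB ℓ) := by
    intro ℓ h1 h2
    unfold FDX.countLe
    apply Finset.card_le_card
    apply Finset.monotone_filter_right
    intro i _ hi
    exact keyC ℓ h1 h2 i (keyA ℓ h1 h2 (p i) (hp i) hi)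
  -- step-down index comparison
  set L := FDX.sdIndex p τGR with hL
  set L' := FDX.sdIndex p τPB with hL'
  have hLm : L ≤ m := @Nat.findGreatest_le _ (Classical.decPred _) m
  have hPL : ∀ ℓ', 1 ≤ ℓ' → ℓ' ≤ L → ℓ' ≤ FDX.countLe p (τGR ℓ') :=
    @Nat.findGreatest_spec 0
      (fun ℓ => ∀ ℓ', 1 ≤ ℓ' → ℓ' ≤ ℓ → ℓ' ≤ FDX.countLe p (τGR ℓ'))
      (Classical.decPred _) m (Nat.zero_le m)
      (fun ℓ' h1 h2 => absurd h2 (by omega))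
  have hLL' : L ≤ L' :=
    @Nat.le_findGreatest L
      (fun ℓ => ∀ ℓ', 1 ≤ ℓ' → ℓ' ≤ ℓ → ℓ' ≤ FDX.countLe p (τPB ℓ'))
      (Classical.decPred _) m hLm
      (fun ℓ' h1 h2 => le_trans (hPL ℓ' h1 h2) (hcnt ℓ' h1 (le_trans h2 hLm)))
  have hL'm : L' ≤ m := @Nat.findGreatest_le _ (Classical.decPred _) m
  -- conclusion
  intro i hi
  unfold FDX.sdReject at hi ⊢
  by_cases hL0 : L = 0
  · rw [← hL, hL0] at hi
    simp at hi
  · rw [← hL, if_neg hL0] at hi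
    have hL'0 : FDX.sdIndex p τPB ≠ 0 := by
      rw [← hL']; omega
    rw [if_neg hL'0, ← hL']
    simp only [Finset.mem_filter, Finset.mem_univ, true_and] at hi ⊢
    have hL1 : 1 ≤ L := by omega
    have hξL : ξPB L (p i) ≤ ζ := keyA L hL1 hLm (p i) (hp i) hi
    have hξL' : ξPB L' (p i) ≤ ζ :=
      le_trans (keyB (p i) (hA (hp i)) L L' hL1 hLL' hL'm) hξL
    exact keyC L' (le_trans hL1 hLL') hL'm i hξL'
end
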